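/- arXiv:1807.03884 — 8 statements merged into one kernel-verified Lean document; each statement's English description precedes it below -/
import Mathlib

section
/- Let 𝔤 ⊆ End(ℝ⁷) be the 14-dimensional span of the elements E_{kj} (j ≠ k), E₁₁ − E₂₂, E₂₂ − E₃₃, v₁, v₂, v₃, δ₁, δ₂, δ₃. Let ι ∈ End(ℝ⁷) be the linear map with ι(u₀) = −u₀, ι(eᵢ) = −eᵢ*, ι(eᵢ*) = −eᵢ for i = 1, 2, 3, and define θ(X) = ι ∘ X ∘ ι for X ∈ End(ℝ⁷). Then: (i) θ maps 𝔤 into 𝔤; (ii) θ² = id and θ([X,Y]) = [θ(X), θ(Y)] for all X, Y ∈ 𝔤 (commutator bracket); (iii) the symmetric bilinear form B_θ(X, Y) = −Tr(X ∘ θ(Y)) is positive definite on 𝔤. -/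
set_option autoImplicit false

/-!
The split Lie algebra `𝔤₂ ⊆ 𝔰𝔬(V₇) ⊆ End(ℝ⁷)` and its Cartan involution
`θ(X) = ι ∘ X ∘ ι`.  Basis of `ℝ⁷`: index 0 ↦ u₀, indices 1,2,3 ↦ e₁,e₂,e₃,
indices 4,5,6 ↦ e₁*,e₂*,e₃*; bilinear form `(eᵢ, eⱼ*) = −δᵢⱼ`, `(u₀,u₀) = −2`.
Endomorphisms of `ℝ⁷` are represented by `7 × 7` matrices.
-/

namespace Stmt1

/-- The symmetric bilinear form on `V₇ = ℝ⁷`. -/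
def B (v w : Fin 7 → ℝ) : ℝ :=
  -2 * v 0 * w 0 - (v 1 * w 4 + v 4 * w 1) - (v 2 * w 5 + v 5 * w 2) - (v 3 * w 6 + v 6 * w 3)

/-- `(w∧x)(u) = (x,u)w − (w,u)x`, written as a matrix (its `j`-th column is the value
on the `j`-th standard basis vector). -/
def wedge (w x : Fin 7 → ℝ) : Matrix (Fin 7) (Fin 7) ℝ :=
  Matrix.of fun i j => B x (Pi.single j 1) * w i - B w (Pi.single j 1) * x i

def u0 : Fin 7 → ℝ := Pi.single 0 1
def e : Fin 3 → Fin 7 → ℝ := fun j => Pi.single (![1, 2, 3] j) 1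
def es : Fin 3 → Fin 7 → ℝ := fun j => Pi.single (![4, 5, 6] j) 1

/-- `E_{kj} = eⱼ* ∧ e_k` (indices `0,1,2` standing for `1,2,3`). -/
def E (k j : Fin 3) : Matrix (Fin 7) (Fin 7) ℝ := wedge (es j) (e k)

/-- `v_j = u₀∧e_j + e_{j+1}*∧e_{j+2}*`, indices mod 3. -/
def V (j : Fin 3) : Matrix (Fin 7) (Fin 7) ℝ :=
  wedge u0 (e j) + wedge (es (j + 1)) (es (j + 2))

/-- `δ_j = u₀∧eⱼ* + e_{j+1}∧e_{j+2}`, indices mod 3. -/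
def D (j : Fin 3) : Matrix (Fin 7) (Fin 7) ℝ :=
  wedge u0 (es j) + wedge (e (j + 1)) (e (j + 2))

/-- The 14-dimensional span `𝔤 = 𝔤₂`. -/
def g2 : Submodule ℝ (Matrix (Fin 7) (Fin 7) ℝ) :=
  Submodule.span ℝ
    ({E 0 1, E 0 2, E 1 0, E 1 2, E 2 0, E 2 1, E 0 0 - E 1 1, E 1 1 - E 2 2,
      V 0, V 1, V 2, D 0, D 1, D 2} : Set (Matrix (Fin 7) (Fin 7) ℝ))

/-- The involution `ι` with `ι(u₀) = −u₀`, `ι(eᵢ) = −eᵢ*`, `ι(eᵢ*) = −eᵢ`. -/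
def iota : Matrix (Fin 7) (Fin 7) ℝ :=
  Matrix.of fun i j => if i = ![0, 4, 5, 6, 1, 2, 3] j then (-1 : ℝ) else 0

/-- `θ(X) = ι ∘ X ∘ ι`. -/
def theta (X : Matrix (Fin 7) (Fin 7) ℝ) : Matrix (Fin 7) (Fin 7) ℝ := iota * X * iota

end Stmt1

noncomputable section
namespace Aux
open Stmt1

set_option maxHeartbeats 1600000

/-- abstract linear combination of the 14 generators -/
def combo (c0 : ℝ) (c1 : ℝ) (c2 : ℝ) (c3 : ℝ) (c4 : ℝ) (c5 : ℝ) (c6 : ℝ) (c7 : ℝ) (c8 : ℝ) (c9 : ℝ) (c10 : ℝ) (c11 : ℝ) (c12 : ℝ) (c13 : ℝ) : Matrix (Fin 7) (Fin 7) ℝ :=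
  c0 • E 0 1 + c1 • E 0 2 + c2 • E 1 0 + c3 • E 1 2 + c4 • E 2 0 + c5 • E 2 1 +
    c6 • (E 0 0 - E 1 1) + c7 • (E 1 1 - E 2 2) + c8 • V 0 + c9 • V 1 + c10 • V 2 +
    c11 • D 0 + c12 • D 1 + c13 • D 2

/-- the same combination, as a concrete matrix -/
def Mc (c0 : ℝ) (c1 : ℝ) (c2 : ℝ) (c3 : ℝ) (c4 : ℝ) (c5 : ℝ) (c6 : ℝ) (c7 : ℝ) (c8 : ℝ) (c9 : ℝ) (c10 : ℝ) (c11 : ℝ) (c12 : ℝ) (c13 : ℝ) : Matrix (Fin 7) (Fin 7) ℝ :=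
  Matrix.of fun i j =>
    if i = 0 then (if j = 0 then (0:ℝ) else if j = 1 then -c11 else if j = 2 then -c12 else if j = 3 then -c13 else if j = 4 then -c8 else if j = 5 then -c9 else -c10)
    else     if i = 1 then (if j = 0 then 2*c8 else if j = 1 then c6 else if j = 2 then c0 else if j = 3 then c1 else if j = 4 then (0:ℝ) else if j = 5 then -c13 else c12)
    else     if i = 2 then (if j = 0 then 2*c9 else if j = 1 then c2 else if j = 2 then -c6 + c7 else if j = 3 then c3 else if j = 4 then c13 else if j = 5 then (0:ℝ) else -c11)
    else     if i = 3 then (if j = 0 then 2*c10 else if j = 1 then c4 else if j = 2 then c5 else if j = 3 then -c7 else if j = 4 then -c12 else if j = 5 then c11 else (0:ℝ))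
    else     if i = 4 then (if j = 0 then 2*c11 else if j = 1 then (0:ℝ) else if j = 2 then -c10 else if j = 3 then c9 else if j = 4 then -c6 else if j = 5 then -c2 else -c4)
    else     if i = 5 then (if j = 0 then 2*c12 else if j = 1 then c10 else if j = 2 then (0:ℝ) else if j = 3 then -c8 else if j = 4 then -c0 else if j = 5 then c6 - c7 else -c5)
    else (if j = 0 then 2*c13 else if j = 1 then -c9 else if j = 2 then c8 else if j = 3 then (0:ℝ) else if j = 4 then -c1 else if j = 5 then -c3 else c7)

lemma combo_eq (c0 : ℝ) (c1 : ℝ) (c2 : ℝ) (c3 : ℝ) (c4 : ℝ) (c5 : ℝ) (c6 : ℝ) (c7 : ℝ) (c8 : ℝ) (c9 : ℝ) (c10 : ℝ) (c11 : ℝ) (c12 : ℝ) (c13 : ℝ) : combo c0 c1 c2 c3 c4 c5 c6 c7 c8 c9 c10 c11 c12 c13 = Mc c0 c1 c2 c3 c4 c5 c6 c7 c8 c9 c10 c11 c12 c13 := by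
  rw [← Matrix.ext_iff]
  norm_num (config := { decide := true }) [Fin.forall_fin_succ, combo, Mc, E, V, D, wedge, B,
    e, es, u0, Pi.single_apply, Matrix.add_apply, Matrix.sub_apply, Matrix.smul_apply]
  repeat' apply And.intro
  all_goals ring

lemma gen0_eq : E 0 1 = Mc 1 0 0 0 0 0 0 0 0 0 0 0 0 0 := by
  rw [← combo_eq]; simp [combo]

lemma gen1_eq : E 0 2 = Mc 0 1 0 0 0 0 0 0 0 0 0 0 0 0 := by
  rw [← combo_eq]; simp [combo]

lemma gen2_eq : E 1 0 = Mc 0 0 1 0 0 0 0 0 0 0 0 0 0 0 := by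
  rw [← combo_eq]; simp [combo]

lemma gen3_eq : E 1 2 = Mc 0 0 0 1 0 0 0 0 0 0 0 0 0 0 := by
  rw [← combo_eq]; simp [combo]

lemma gen4_eq : E 2 0 = Mc 0 0 0 0 1 0 0 0 0 0 0 0 0 0 := by
  rw [← combo_eq]; simp [combo]

lemma gen5_eq : E 2 1 = Mc 0 0 0 0 0 1 0 0 0 0 0 0 0 0 := by
  rw [← combo_eq]; simp [combo]

lemma gen6_eq : (E 0 0 - E 1 1) = Mc 0 0 0 0 0 0 1 0 0 0 0 0 0 0 := by
  rw [← combo_eq]; simp [combo]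

lemma gen7_eq : (E 1 1 - E 2 2) = Mc 0 0 0 0 0 0 0 1 0 0 0 0 0 0 := by
  rw [← combo_eq]; simp [combo]

lemma gen8_eq : V 0 = Mc 0 0 0 0 0 0 0 0 1 0 0 0 0 0 := by
  rw [← combo_eq]; simp [combo]

lemma gen9_eq : V 1 = Mc 0 0 0 0 0 0 0 0 0 1 0 0 0 0 := by
  rw [← combo_eq]; simp [combo]

lemma gen10_eq : V 2 = Mc 0 0 0 0 0 0 0 0 0 0 1 0 0 0 := by
  rw [← combo_eq]; simp [combo]

lemma gen11_eq : D 0 = Mc 0 0 0 0 0 0 0 0 0 0 0 1 0 0 := by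
  rw [← combo_eq]; simp [combo]

lemma gen12_eq : D 1 = Mc 0 0 0 0 0 0 0 0 0 0 0 0 1 0 := by
  rw [← combo_eq]; simp [combo]

lemma gen13_eq : D 2 = Mc 0 0 0 0 0 0 0 0 0 0 0 0 0 1 := by
  rw [← combo_eq]; simp [combo]


lemma combo_mem (c0 : ℝ) (c1 : ℝ) (c2 : ℝ) (c3 : ℝ) (c4 : ℝ) (c5 : ℝ) (c6 : ℝ) (c7 : ℝ) (c8 : ℝ) (c9 : ℝ) (c10 : ℝ) (c11 : ℝ) (c12 : ℝ) (c13 : ℝ) : combo c0 c1 c2 c3 c4 c5 c6 c7 c8 c9 c10 c11 c12 c13 ∈ g2 := by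
  unfold combo g2
  repeat' apply Submodule.add_mem
  all_goals
    exact Submodule.smul_mem _ _ (Submodule.subset_span (by
      simp only [Set.mem_insert_iff, Set.mem_singleton_iff]; tauto))

lemma rep_Mc (c0 : ℝ) (c1 : ℝ) (c2 : ℝ) (c3 : ℝ) (c4 : ℝ) (c5 : ℝ) (c6 : ℝ) (c7 : ℝ) (c8 : ℝ) (c9 : ℝ) (c10 : ℝ) (c11 : ℝ) (c12 : ℝ) (c13 : ℝ) :
    combo (Mc c0 c1 c2 c3 c4 c5 c6 c7 c8 c9 c10 c11 c12 c13 1 2) (Mc c0 c1 c2 c3 c4 c5 c6 c7 c8 c9 c10 c11 c12 c13 1 3) (Mc c0 c1 c2 c3 c4 c5 c6 c7 c8 c9 c10 c11 c12 c13 2 1) (Mc c0 c1 c2 c3 c4 c5 c6 c7 c8 c9 c10 c11 c12 c13 2 3)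
      (Mc c0 c1 c2 c3 c4 c5 c6 c7 c8 c9 c10 c11 c12 c13 3 1) (Mc c0 c1 c2 c3 c4 c5 c6 c7 c8 c9 c10 c11 c12 c13 3 2) (Mc c0 c1 c2 c3 c4 c5 c6 c7 c8 c9 c10 c11 c12 c13 1 1) (-(Mc c0 c1 c2 c3 c4 c5 c6 c7 c8 c9 c10 c11 c12 c13 3 3))
      (-(Mc c0 c1 c2 c3 c4 c5 c6 c7 c8 c9 c10 c11 c12 c13 0 4)) (-(Mc c0 c1 c2 c3 c4 c5 c6 c7 c8 c9 c10 c11 c12 c13 0 5)) (-(Mc c0 c1 c2 c3 c4 c5 c6 c7 c8 c9 c10 c11 c12 c13 0 6)) (-(Mc c0 c1 c2 c3 c4 c5 c6 c7 c8 c9 c10 c11 c12 c13 0 1))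
      (-(Mc c0 c1 c2 c3 c4 c5 c6 c7 c8 c9 c10 c11 c12 c13 0 2)) (-(Mc c0 c1 c2 c3 c4 c5 c6 c7 c8 c9 c10 c11 c12 c13 0 3)) = Mc c0 c1 c2 c3 c4 c5 c6 c7 c8 c9 c10 c11 c12 c13 := by
  have h : ∀ (i j : Fin 7), Mc c0 c1 c2 c3 c4 c5 c6 c7 c8 c9 c10 c11 c12 c13 i j = Mc c0 c1 c2 c3 c4 c5 c6 c7 c8 c9 c10 c11 c12 c13 i j := fun _ _ => rfl
  rw [show Mc c0 c1 c2 c3 c4 c5 c6 c7 c8 c9 c10 c11 c12 c13 1 2 = c0 from by norm_num (config := { decide := true }) [Mc],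
      show Mc c0 c1 c2 c3 c4 c5 c6 c7 c8 c9 c10 c11 c12 c13 1 3 = c1 from by norm_num (config := { decide := true }) [Mc],
      show Mc c0 c1 c2 c3 c4 c5 c6 c7 c8 c9 c10 c11 c12 c13 2 1 = c2 from by norm_num (config := { decide := true }) [Mc],
      show Mc c0 c1 c2 c3 c4 c5 c6 c7 c8 c9 c10 c11 c12 c13 2 3 = c3 from by norm_num (config := { decide := true }) [Mc],
      show Mc c0 c1 c2 c3 c4 c5 c6 c7 c8 c9 c10 c11 c12 c13 3 1 = c4 from by norm_num (config := { decide := true }) [Mc],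
      show Mc c0 c1 c2 c3 c4 c5 c6 c7 c8 c9 c10 c11 c12 c13 3 2 = c5 from by norm_num (config := { decide := true }) [Mc],
      show Mc c0 c1 c2 c3 c4 c5 c6 c7 c8 c9 c10 c11 c12 c13 1 1 = c6 from by norm_num (config := { decide := true }) [Mc],
      show Mc c0 c1 c2 c3 c4 c5 c6 c7 c8 c9 c10 c11 c12 c13 3 3 = -c7 from by norm_num (config := { decide := true }) [Mc],
      show Mc c0 c1 c2 c3 c4 c5 c6 c7 c8 c9 c10 c11 c12 c13 0 4 = -c8 from by norm_num (config := { decide := true }) [Mc],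
      show Mc c0 c1 c2 c3 c4 c5 c6 c7 c8 c9 c10 c11 c12 c13 0 5 = -c9 from by norm_num (config := { decide := true }) [Mc],
      show Mc c0 c1 c2 c3 c4 c5 c6 c7 c8 c9 c10 c11 c12 c13 0 6 = -c10 from by norm_num (config := { decide := true }) [Mc],
      show Mc c0 c1 c2 c3 c4 c5 c6 c7 c8 c9 c10 c11 c12 c13 0 1 = -c11 from by norm_num (config := { decide := true }) [Mc],
      show Mc c0 c1 c2 c3 c4 c5 c6 c7 c8 c9 c10 c11 c12 c13 0 2 = -c12 from by norm_num (config := { decide := true }) [Mc],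
      show Mc c0 c1 c2 c3 c4 c5 c6 c7 c8 c9 c10 c11 c12 c13 0 3 = -c13 from by norm_num (config := { decide := true }) [Mc]]
  rw [neg_neg, neg_neg, neg_neg, neg_neg, neg_neg, neg_neg, neg_neg, combo_eq]

lemma combo_add (a0 a1 a2 a3 a4 a5 a6 a7 a8 a9 a10 a11 a12 a13
    b0 b1 b2 b3 b4 b5 b6 b7 b8 b9 b10 b11 b12 b13 : ℝ) :
    combo a0 a1 a2 a3 a4 a5 a6 a7 a8 a9 a10 a11 a12 a13 +
      combo b0 b1 b2 b3 b4 b5 b6 b7 b8 b9 b10 b11 b12 b13 =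
    combo (a0+b0) (a1+b1) (a2+b2) (a3+b3) (a4+b4) (a5+b5) (a6+b6) (a7+b7) (a8+b8) (a9+b9)
      (a10+b10) (a11+b11) (a12+b12) (a13+b13) := by
  simp only [combo]; module

lemma combo_smul (r a0 a1 a2 a3 a4 a5 a6 a7 a8 a9 a10 a11 a12 a13 : ℝ) :
    r • combo a0 a1 a2 a3 a4 a5 a6 a7 a8 a9 a10 a11 a12 a13 =
    combo (r*a0) (r*a1) (r*a2) (r*a3) (r*a4) (r*a5) (r*a6) (r*a7) (r*a8) (r*a9) (r*a10)
      (r*a11) (r*a12) (r*a13) := by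
  simp only [combo]; module

lemma rep (X : Matrix (Fin 7) (Fin 7) ℝ) (hX : X ∈ g2) :
    combo (X 1 2) (X 1 3) (X 2 1) (X 2 3) (X 3 1) (X 3 2) (X 1 1) (-(X 3 3))
      (-(X 0 4)) (-(X 0 5)) (-(X 0 6)) (-(X 0 1)) (-(X 0 2)) (-(X 0 3)) = X := by
  induction hX using Submodule.span_induction with
  | mem x hx =>
    simp only [Set.mem_insert_iff, Set.mem_singleton_iff] at hx
    rcases hx with rfl|rfl|rfl|rfl|rfl|rfl|rfl|rfl|rfl|rfl|rfl|rfl|rfl|rfl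
    · rw [gen0_eq]; exact rep_Mc 1 0 0 0 0 0 0 0 0 0 0 0 0 0
    · rw [gen1_eq]; exact rep_Mc 0 1 0 0 0 0 0 0 0 0 0 0 0 0
    · rw [gen2_eq]; exact rep_Mc 0 0 1 0 0 0 0 0 0 0 0 0 0 0
    · rw [gen3_eq]; exact rep_Mc 0 0 0 1 0 0 0 0 0 0 0 0 0 0
    · rw [gen4_eq]; exact rep_Mc 0 0 0 0 1 0 0 0 0 0 0 0 0 0
    · rw [gen5_eq]; exact rep_Mc 0 0 0 0 0 1 0 0 0 0 0 0 0 0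
    · rw [gen6_eq]; exact rep_Mc 0 0 0 0 0 0 1 0 0 0 0 0 0 0
    · rw [gen7_eq]; exact rep_Mc 0 0 0 0 0 0 0 1 0 0 0 0 0 0
    · rw [gen8_eq]; exact rep_Mc 0 0 0 0 0 0 0 0 1 0 0 0 0 0
    · rw [gen9_eq]; exact rep_Mc 0 0 0 0 0 0 0 0 0 1 0 0 0 0
    · rw [gen10_eq]; exact rep_Mc 0 0 0 0 0 0 0 0 0 0 1 0 0 0
    · rw [gen11_eq]; exact rep_Mc 0 0 0 0 0 0 0 0 0 0 0 1 0 0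
    · rw [gen12_eq]; exact rep_Mc 0 0 0 0 0 0 0 0 0 0 0 0 1 0
    · rw [gen13_eq]; exact rep_Mc 0 0 0 0 0 0 0 0 0 0 0 0 0 1
  | zero => simp [combo]
  | add x y _ _ hx hy =>
    simp only [Matrix.add_apply, neg_add]
    rw [← combo_add, hx, hy]
  | smul a x _ hx =>
    simp only [Matrix.smul_apply, smul_eq_mul, ← mul_neg]
    rw [← combo_smul, hx]

lemma theta_Mc (c0 : ℝ) (c1 : ℝ) (c2 : ℝ) (c3 : ℝ) (c4 : ℝ) (c5 : ℝ) (c6 : ℝ) (c7 : ℝ) (c8 : ℝ) (c9 : ℝ) (c10 : ℝ) (c11 : ℝ) (c12 : ℝ) (c13 : ℝ) :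
    theta (Mc c0 c1 c2 c3 c4 c5 c6 c7 c8 c9 c10 c11 c12 c13) = Mc (-c2) (-c4) (-c0) (-c5) (-c1) (-c3) (-c6) (-c7) c11 c12 c13 c8 c9 c10 := by
  rw [← Matrix.ext_iff]
  norm_num (config := { decide := true }) [Fin.forall_fin_succ, theta, iota, Mc,
    Matrix.mul_apply, Fin.sum_univ_seven]
  repeat' apply And.intro
  all_goals ring

lemma iota_sq : iota * iota = 1 := by
  rw [← Matrix.ext_iff]
  norm_num (config := { decide := true }) [Fin.forall_fin_succ, iota, Matrix.mul_apply,
    Fin.sum_univ_seven, Matrix.one_apply]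

lemma theta_mul (A B : Matrix (Fin 7) (Fin 7) ℝ) : theta (A * B) = theta A * theta B := by
  simp only [theta]
  rw [show iota * A * iota * (iota * B * iota) = iota * A * (iota * iota) * B * iota from by
        noncomm_ring, iota_sq]
  noncomm_ring

lemma quad (c0 : ℝ) (c1 : ℝ) (c2 : ℝ) (c3 : ℝ) (c4 : ℝ) (c5 : ℝ) (c6 : ℝ) (c7 : ℝ) (c8 : ℝ) (c9 : ℝ) (c10 : ℝ) (c11 : ℝ) (c12 : ℝ) (c13 : ℝ) :
    -(Mc c0 c1 c2 c3 c4 c5 c6 c7 c8 c9 c10 c11 c12 c13 * theta (Mc c0 c1 c2 c3 c4 c5 c6 c7 c8 c9 c10 c11 c12 c13)).trace = 2*c0^2 + 2*c1^2 + 2*c2^2 + 2*c3^2 + 2*c4^2 + 2*c5^2 + 4*c6^2 - 4*c6*c7 + 4*c7^2 + 6*c8^2 + 6*c9^2 + 6*c10^2 + 6*c11^2 + 6*c12^2 + 6*c13^2 := by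
  rw [theta_Mc]
  simp (config := { decide := true }) [Matrix.trace, Matrix.diag, Matrix.mul_apply,
    Fin.sum_univ_seven, Mc]
  ring

end Aux
end
set_option maxHeartbeats 1600000 in
open Stmt1 in
/-- `θ` preserves `𝔤₂`, is an involutive Lie algebra automorphism of `𝔤₂`, and the
symmetric bilinear form `B_θ(X, Y) = −Tr(X ∘ θ(Y))` is positive definite on `𝔤₂`:
`θ` is a Cartan involution. -/
theorem theta_is_cartan_involution :
    (∀ X ∈ g2, theta X ∈ g2) ∧
    (∀ X ∈ g2, theta (theta X) = X) ∧
    (∀ X ∈ g2, ∀ Y ∈ g2, theta (X * Y - Y * X) = theta X * theta Y - theta Y * theta X) ∧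
    (∀ X ∈ g2, ∀ Y ∈ g2, -(X * theta Y).trace = -(Y * theta X).trace) ∧
    (∀ X ∈ g2, X ≠ 0 → 0 < -(X * theta X).trace) := by
  refine ⟨?_, ?_, ?_, ?_, ?_⟩
  · -- θ preserves 𝔤₂
    intro X hX
    have h := Aux.rep X hX
    rw [← h, Aux.combo_eq, Aux.theta_Mc, ← Aux.combo_eq]
    exact Aux.combo_mem _ _ _ _ _ _ _ _ _ _ _ _ _ _
  · -- θ² = id
    intro X _
    simp only [theta]
    rw [show iota * (iota * X * iota) * iota = iota * iota * X * (iota * iota) from by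
          noncomm_ring, Aux.iota_sq, one_mul, mul_one]
  · -- θ is a Lie algebra homomorphism
    intro X _ Y _
    simp only [theta, Matrix.mul_sub, Matrix.sub_mul]
    rw [show iota * (X * Y) * iota = iota * X * (iota * iota) * Y * iota from by
          rw [Aux.iota_sq]; noncomm_ring,
        show iota * (Y * X) * iota = iota * Y * (iota * iota) * X * iota from by
          rw [Aux.iota_sq]; noncomm_ring]
    noncomm_ring
  · -- B_θ is symmetric
    intro X _ Y _
    simp only [theta]
    rw [show X * (iota * Y * iota) = (X * iota) * (Y * iota) from by noncomm_ring,
        Matrix.trace_mul_comm,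
        show (Y * iota) * (X * iota) = Y * (iota * X * iota) from by noncomm_ring]
  · -- B_θ is positive definite
    intro X hX hne
    have h := Aux.rep X hX
    set c0 := X 1 2; set c1 := X 1 3; set c2 := X 2 1; set c3 := X 2 3
    set c4 := X 3 1; set c5 := X 3 2; set c6 := X 1 1; set c7 := -(X 3 3)
    set c8 := -(X 0 4); set c9 := -(X 0 5); set c10 := -(X 0 6); set c11 := -(X 0 1)
    set c12 := -(X 0 2); set c13 := -(X 0 3)
    rw [← h, Aux.combo_eq, Aux.quad]
    by_contra hle
    push_neg at hle
    have hzero : X = 0 := by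
      have hc0 : c0 = 0 := by
        have hle2 : c0 ^ 2 ≤ 0 := by
          nlinarith [sq_nonneg c0, sq_nonneg c1, sq_nonneg c2, sq_nonneg c3, sq_nonneg c4,
            sq_nonneg c5, sq_nonneg c6, sq_nonneg c7, sq_nonneg c8, sq_nonneg c9,
            sq_nonneg c10, sq_nonneg c11, sq_nonneg c12, sq_nonneg c13, sq_nonneg (c6 - c7)]
        have h2 : c0 ^ 2 = 0 := le_antisymm hle2 (sq_nonneg c0)
        exact pow_eq_zero_iff two_ne_zero |>.mp h2
      have hc1 : c1 = 0 := by
        have hle2 : c1 ^ 2 ≤ 0 := by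
          nlinarith [sq_nonneg c0, sq_nonneg c1, sq_nonneg c2, sq_nonneg c3, sq_nonneg c4,
            sq_nonneg c5, sq_nonneg c6, sq_nonneg c7, sq_nonneg c8, sq_nonneg c9,
            sq_nonneg c10, sq_nonneg c11, sq_nonneg c12, sq_nonneg c13, sq_nonneg (c6 - c7)]
        have h2 : c1 ^ 2 = 0 := le_antisymm hle2 (sq_nonneg c1)
        exact pow_eq_zero_iff two_ne_zero |>.mp h2
      have hc2 : c2 = 0 := by
        have hle2 : c2 ^ 2 ≤ 0 := by
          nlinarith [sq_nonneg c0, sq_nonneg c1, sq_nonneg c2, sq_nonneg c3, sq_nonneg c4,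
            sq_nonneg c5, sq_nonneg c6, sq_nonneg c7, sq_nonneg c8, sq_nonneg c9,
            sq_nonneg c10, sq_nonneg c11, sq_nonneg c12, sq_nonneg c13, sq_nonneg (c6 - c7)]
        have h2 : c2 ^ 2 = 0 := le_antisymm hle2 (sq_nonneg c2)
        exact pow_eq_zero_iff two_ne_zero |>.mp h2
      have hc3 : c3 = 0 := by
        have hle2 : c3 ^ 2 ≤ 0 := by
          nlinarith [sq_nonneg c0, sq_nonneg c1, sq_nonneg c2, sq_nonneg c3, sq_nonneg c4,
            sq_nonneg c5, sq_nonneg c6, sq_nonneg c7, sq_nonneg c8, sq_nonneg c9,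
            sq_nonneg c10, sq_nonneg c11, sq_nonneg c12, sq_nonneg c13, sq_nonneg (c6 - c7)]
        have h2 : c3 ^ 2 = 0 := le_antisymm hle2 (sq_nonneg c3)
        exact pow_eq_zero_iff two_ne_zero |>.mp h2
      have hc4 : c4 = 0 := by
        have hle2 : c4 ^ 2 ≤ 0 := by
          nlinarith [sq_nonneg c0, sq_nonneg c1, sq_nonneg c2, sq_nonneg c3, sq_nonneg c4,
            sq_nonneg c5, sq_nonneg c6, sq_nonneg c7, sq_nonneg c8, sq_nonneg c9,
            sq_nonneg c10, sq_nonneg c11, sq_nonneg c12, sq_nonneg c13, sq_nonneg (c6 - c7)]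
        have h2 : c4 ^ 2 = 0 := le_antisymm hle2 (sq_nonneg c4)
        exact pow_eq_zero_iff two_ne_zero |>.mp h2
      have hc5 : c5 = 0 := by
        have hle2 : c5 ^ 2 ≤ 0 := by
          nlinarith [sq_nonneg c0, sq_nonneg c1, sq_nonneg c2, sq_nonneg c3, sq_nonneg c4,
            sq_nonneg c5, sq_nonneg c6, sq_nonneg c7, sq_nonneg c8, sq_nonneg c9,
            sq_nonneg c10, sq_nonneg c11, sq_nonneg c12, sq_nonneg c13, sq_nonneg (c6 - c7)]
        have h2 : c5 ^ 2 = 0 := le_antisymm hle2 (sq_nonneg c5)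
        exact pow_eq_zero_iff two_ne_zero |>.mp h2
      have hc6 : c6 = 0 := by
        have hle2 : c6 ^ 2 ≤ 0 := by
          nlinarith [sq_nonneg c0, sq_nonneg c1, sq_nonneg c2, sq_nonneg c3, sq_nonneg c4,
            sq_nonneg c5, sq_nonneg c6, sq_nonneg c7, sq_nonneg c8, sq_nonneg c9,
            sq_nonneg c10, sq_nonneg c11, sq_nonneg c12, sq_nonneg c13, sq_nonneg (c6 - c7)]
        have h2 : c6 ^ 2 = 0 := le_antisymm hle2 (sq_nonneg c6)
        exact pow_eq_zero_iff two_ne_zero |>.mp h2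
      have hc7 : c7 = 0 := by
        have hle2 : c7 ^ 2 ≤ 0 := by
          nlinarith [sq_nonneg c0, sq_nonneg c1, sq_nonneg c2, sq_nonneg c3, sq_nonneg c4,
            sq_nonneg c5, sq_nonneg c6, sq_nonneg c7, sq_nonneg c8, sq_nonneg c9,
            sq_nonneg c10, sq_nonneg c11, sq_nonneg c12, sq_nonneg c13, sq_nonneg (c6 - c7)]
        have h2 : c7 ^ 2 = 0 := le_antisymm hle2 (sq_nonneg c7)
        exact pow_eq_zero_iff two_ne_zero |>.mp h2
      have hc8 : c8 = 0 := by
        have hle2 : c8 ^ 2 ≤ 0 := by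
          nlinarith [sq_nonneg c0, sq_nonneg c1, sq_nonneg c2, sq_nonneg c3, sq_nonneg c4,
            sq_nonneg c5, sq_nonneg c6, sq_nonneg c7, sq_nonneg c8, sq_nonneg c9,
            sq_nonneg c10, sq_nonneg c11, sq_nonneg c12, sq_nonneg c13, sq_nonneg (c6 - c7)]
        have h2 : c8 ^ 2 = 0 := le_antisymm hle2 (sq_nonneg c8)
        exact pow_eq_zero_iff two_ne_zero |>.mp h2
      have hc9 : c9 = 0 := by
        have hle2 : c9 ^ 2 ≤ 0 := by
          nlinarith [sq_nonneg c0, sq_nonneg c1, sq_nonneg c2, sq_nonneg c3, sq_nonneg c4,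
            sq_nonneg c5, sq_nonneg c6, sq_nonneg c7, sq_nonneg c8, sq_nonneg c9,
            sq_nonneg c10, sq_nonneg c11, sq_nonneg c12, sq_nonneg c13, sq_nonneg (c6 - c7)]
        have h2 : c9 ^ 2 = 0 := le_antisymm hle2 (sq_nonneg c9)
        exact pow_eq_zero_iff two_ne_zero |>.mp h2
      have hc10 : c10 = 0 := by
        have hle2 : c10 ^ 2 ≤ 0 := by
          nlinarith [sq_nonneg c0, sq_nonneg c1, sq_nonneg c2, sq_nonneg c3, sq_nonneg c4,
            sq_nonneg c5, sq_nonneg c6, sq_nonneg c7, sq_nonneg c8, sq_nonneg c9,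
            sq_nonneg c10, sq_nonneg c11, sq_nonneg c12, sq_nonneg c13, sq_nonneg (c6 - c7)]
        have h2 : c10 ^ 2 = 0 := le_antisymm hle2 (sq_nonneg c10)
        exact pow_eq_zero_iff two_ne_zero |>.mp h2
      have hc11 : c11 = 0 := by
        have hle2 : c11 ^ 2 ≤ 0 := by
          nlinarith [sq_nonneg c0, sq_nonneg c1, sq_nonneg c2, sq_nonneg c3, sq_nonneg c4,
            sq_nonneg c5, sq_nonneg c6, sq_nonneg c7, sq_nonneg c8, sq_nonneg c9,
            sq_nonneg c10, sq_nonneg c11, sq_nonneg c12, sq_nonneg c13, sq_nonneg (c6 - c7)]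
        have h2 : c11 ^ 2 = 0 := le_antisymm hle2 (sq_nonneg c11)
        exact pow_eq_zero_iff two_ne_zero |>.mp h2
      have hc12 : c12 = 0 := by
        have hle2 : c12 ^ 2 ≤ 0 := by
          nlinarith [sq_nonneg c0, sq_nonneg c1, sq_nonneg c2, sq_nonneg c3, sq_nonneg c4,
            sq_nonneg c5, sq_nonneg c6, sq_nonneg c7, sq_nonneg c8, sq_nonneg c9,
            sq_nonneg c10, sq_nonneg c11, sq_nonneg c12, sq_nonneg c13, sq_nonneg (c6 - c7)]
        have h2 : c12 ^ 2 = 0 := le_antisymm hle2 (sq_nonneg c12)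
        exact pow_eq_zero_iff two_ne_zero |>.mp h2
      have hc13 : c13 = 0 := by
        have hle2 : c13 ^ 2 ≤ 0 := by
          nlinarith [sq_nonneg c0, sq_nonneg c1, sq_nonneg c2, sq_nonneg c3, sq_nonneg c4,
            sq_nonneg c5, sq_nonneg c6, sq_nonneg c7, sq_nonneg c8, sq_nonneg c9,
            sq_nonneg c10, sq_nonneg c11, sq_nonneg c12, sq_nonneg c13, sq_nonneg (c6 - c7)]
        have h2 : c13 ^ 2 = 0 := le_antisymm hle2 (sq_nonneg c13)
        exact pow_eq_zero_iff two_ne_zero |>.mp h2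
      rw [← h, hc0, hc1, hc2, hc3, hc4, hc5, hc6, hc7, hc8, hc9, hc10, hc11, hc12, hc13]
      simp [Aux.combo]
    exact hne hzero
end

section
/- Let ν ∈ ℝ and let f : (0, ∞) → ℂ be a twice continuously differentiable function satisfying w²f''(w) + wf'(w) − (w² + ν²)f(w) = 0 for all w > 0, and suppose f has moderate growth: there exist C, N > 0 with |f(w)| ≤ C(1 + w)^N for all w > 0. Then there exists a constant c ∈ ℂ such that f(w) = c·K_ν(w) for all w > 0. -/
/-!
Differentiating under the integral sign, `K = K_ν` solves the equation on `(0, ∞)`: applied to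
the integrand, the differential operator gives the `t`-derivative of
`e^{-x cosh t} (x sinh t cosh νt + ν sinh νt)`, which vanishes at `t = 0` and `t = ∞`. Moreover
`e^{-x cosh 1} ≤ K(x) ≤ C e^{-x}` for `x ≥ 1`.

For a second solution `f`, the Wronskian `w (K f' - K' f)` is a constant `A`, so
`(f / K)' = A / (w K²)`. If `A ≠ 0`, this derivative has size at least of order `e^{2w} / w`,
so `f / K` grows at that rate; but the moderate growth of `f` and the lower bound on `K` allow
only `(1 + w)^N e^{w cosh 1}`, and `cosh 1 < 2`. Hence `A = 0` and `f / K` is constant.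
-/

set_option autoImplicit false

open Real MeasureTheory Set Filter Topology

noncomputable def besselK (ν : ℂ) (x : ℝ) : ℂ :=
  ∫ t in Set.Ioi (0 : ℝ), (Real.exp (-x * Real.cosh t) : ℂ) * Complex.cosh (ν * t)

namespace Real

lemma one_add_sq_div_two_le_cosh (x : ℝ) : 1 + x ^ 2 / 2 ≤ cosh x := by
  have hsinh : (x / 2) ^ 2 ≤ sinh (x / 2) ^ 2 := by
    rw [← sq_abs (sinh _), abs_sinh, ← sq_abs (x / 2)]
    gcongr
    exact self_le_sinh_iff.2 (abs_nonneg _)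
  have hcosh : cosh x = 1 + 2 * sinh (x / 2) ^ 2 := by
    conv_lhs => rw [← mul_div_cancel₀ x two_ne_zero, cosh_two_mul, cosh_sq]
    ring
  linarith

lemma cosh_le_exp_abs (x : ℝ) : cosh x ≤ exp |x| := by
  rw [← cosh_abs, cosh_eq]
  linarith [exp_le_exp.2 (neg_le_self (abs_nonneg x))]

lemma abs_sinh_le_cosh (x : ℝ) : |sinh x| ≤ cosh x :=
  abs_le_of_sq_le_sq (by linarith [cosh_sq x]) (cosh_pos x).le

lemma cosh_one_lt_two : cosh 1 < 2 := by
  have h₁ := exp_one_lt_d9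
  have h₂ : exp (-1) < 1 := exp_lt_one_iff.2 (by norm_num)
  rw [cosh_eq]
  linarith

end Real

lemma integrable_exp_mul_sub_mul_sq {a : ℝ} (ha : 0 < a) (b : ℝ) :
    Integrable fun t : ℝ => exp (b * t - a * t ^ 2) := by
  have h := (integrable_cexp_quadratic (b := a) (by simpa using ha) b 0).norm
  refine h.congr (ae_of_all _ fun t => ?_)
  simp only [Complex.norm_exp]
  norm_cast
  ring_nf

lemma tendsto_exp_mul_sub_mul_sq {a : ℝ} (ha : 0 < a) (b : ℝ) :
    Tendsto (fun t : ℝ => exp (b * t - a * t ^ 2)) atTop (𝓝 0) := by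
  refine tendsto_exp_atBot.comp (tendsto_atBot_mono' _ ?_ tendsto_neg_atTop_atBot)
  filter_upwards [eventually_ge_atTop ((b + 1) / a), eventually_ge_atTop 0] with t hbt ht
  have : b + 1 ≤ a * t := by rwa [div_le_iff₀' ha] at hbt
  nlinarith

noncomputable def besselKIntegrand (ν : ℝ) (n : ℕ) (x t : ℝ) : ℝ :=
  (-cosh t) ^ n * exp (-x * cosh t) * cosh (ν * t)

noncomputable def besselKDeriv (ν : ℝ) (n : ℕ) (x : ℝ) : ℝ :=
  ∫ t in Ioi 0, besselKIntegrand ν n x t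

section besselKIntegrand

variable (ν : ℝ) (n : ℕ)

lemma abs_besselKIntegrand (x t : ℝ) :
    |besselKIntegrand ν n x t| = cosh t ^ n * exp (-x * cosh t) * cosh (ν * t) := by
  simp [besselKIntegrand, abs_mul, abs_of_pos (cosh_pos _)]

lemma abs_besselKIntegrand_le {x y t : ℝ} (hy : 0 ≤ y) (hyx : y ≤ x) (ht : 0 ≤ t) :
    |besselKIntegrand ν n x t| ≤ exp (-x) * exp ((n + |ν|) * t - y / 2 * t ^ 2) := by
  have hcosh : cosh t ^ n ≤ exp (n * t) := by
    rw [exp_nat_mul]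
    gcongr
    simpa [abs_of_nonneg ht] using cosh_le_exp_abs t
  have hexp : exp (-x * cosh t) ≤ exp (-x - y / 2 * t ^ 2) := by
    gcongr
    nlinarith [one_add_sq_div_two_le_cosh t, sq_nonneg t]
  have hcoshν : cosh (ν * t) ≤ exp (|ν| * t) := by
    simpa [abs_mul, abs_of_nonneg ht] using cosh_le_exp_abs (ν * t)
  calc |besselKIntegrand ν n x t|
      = cosh t ^ n * exp (-x * cosh t) * cosh (ν * t) := abs_besselKIntegrand ν n x t
    _ ≤ exp (n * t) * exp (-x - y / 2 * t ^ 2) * exp (|ν| * t) := by gcongr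
    _ = exp (-x) * exp ((n + |ν|) * t - y / 2 * t ^ 2) := by
        simp only [← exp_add]; ring_nf

lemma continuous_besselKIntegrand (x : ℝ) : Continuous (besselKIntegrand ν n x) := by
  unfold besselKIntegrand; fun_prop

lemma integrableOn_besselKIntegrand {x : ℝ} (hx : 0 < x) :
    IntegrableOn (besselKIntegrand ν n x) (Ioi 0) := by
  refine (((integrable_exp_mul_sub_mul_sq (half_pos hx) (n + |ν|)).const_mul
    (exp (-x))).integrableOn).mono' (continuous_besselKIntegrand ν n x).aestronglyMeasurable ?_
  filter_upwards [ae_restrict_mem measurableSet_Ioi] with t ht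
  exact abs_besselKIntegrand_le ν n hx.le le_rfl (le_of_lt ht)

lemma tendsto_besselKIntegrand {x : ℝ} (hx : 0 < x) :
    Tendsto (besselKIntegrand ν n x) atTop (𝓝 0) := by
  refine squeeze_zero_norm' ?_ (by simpa using
    (tendsto_exp_mul_sub_mul_sq (half_pos hx) (n + |ν|)).const_mul (exp (-x)))
  filter_upwards [eventually_ge_atTop 0] with t ht
  exact abs_besselKIntegrand_le ν n hx.le le_rfl ht

lemma hasDerivAt_besselKIntegrand (x t : ℝ) :
    HasDerivAt (besselKIntegrand ν n · t) (besselKIntegrand ν (n + 1) x t) x := by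
  have h := (((hasDerivAt_neg x).mul_const (cosh t)).exp.const_mul ((-cosh t) ^ n)).mul_const
    (cosh (ν * t))
  refine h.congr_deriv ?_
  simp only [besselKIntegrand, pow_succ]
  ring

end besselKIntegrand

section besselKDeriv

variable (ν : ℝ)

lemma hasDerivAt_besselKDeriv (n : ℕ) {x : ℝ} (hx : 0 < x) :
    HasDerivAt (besselKDeriv ν n) (besselKDeriv ν (n + 1) x) x := by
  have hbound : ∀ t ∈ Ioi (0 : ℝ), ∀ y ∈ Metric.ball x (x / 2),
      ‖besselKIntegrand ν (n + 1) y t‖ ≤ exp ((↑(n + 1) + |ν|) * t - x / 2 / 2 * t ^ 2) := by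
    intro t ht y hy
    have hxy : x / 2 ≤ y := by linarith [(abs_lt.1 (mem_ball_iff_norm.1 hy)).1]
    refine (abs_besselKIntegrand_le ν (n + 1) (half_pos hx).le hxy (le_of_lt ht)).trans ?_
    exact mul_le_of_le_one_left (exp_pos _).le (exp_le_one_iff.2 (by linarith))
  exact (hasDerivAt_integral_of_dominated_loc_of_deriv_le (Metric.ball_mem_nhds x (half_pos hx))
    (Eventually.of_forall fun y => (continuous_besselKIntegrand ν n y).aestronglyMeasurable)
    (integrableOn_besselKIntegrand ν n hx)
    (continuous_besselKIntegrand ν (n + 1) x).aestronglyMeasurable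
    ((ae_restrict_mem measurableSet_Ioi).mono hbound)
    (integrable_exp_mul_sub_mul_sq (by positivity) _).integrableOn
    (ae_of_all _ fun t y _ => hasDerivAt_besselKIntegrand ν n y t)).2

lemma continuousOn_besselKDeriv (n : ℕ) : ContinuousOn (besselKDeriv ν n) (Ioi 0) :=
  fun _ hx => (hasDerivAt_besselKDeriv ν n hx).continuousAt.continuousWithinAt

noncomputable def besselODEPrimitive (x t : ℝ) : ℝ :=
  exp (-x * cosh t) * (x * sinh t * cosh (ν * t) + ν * sinh (ν * t))

lemma hasDerivAt_besselODEPrimitive (x t : ℝ) :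
    HasDerivAt (besselODEPrimitive ν x)
      (-(x ^ 2 * besselKIntegrand ν 2 x t + x * besselKIntegrand ν 1 x t
        - (x ^ 2 + ν ^ 2) * besselKIntegrand ν 0 x t)) t := by
  have hνt : HasDerivAt (fun t : ℝ => ν * t) ν t := by simpa using (hasDerivAt_id t).const_mul ν
  have h := (((hasDerivAt_cosh t).const_mul (-x)).exp).mul
    ((((hasDerivAt_sinh t).const_mul x).mul ((hasDerivAt_cosh (ν * t)).comp t hνt)).add
      (((hasDerivAt_sinh (ν * t)).comp t hνt).const_mul ν))
  refine h.congr_deriv ?_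
  simp only [besselKIntegrand, Pi.mul_apply, Pi.add_apply, Function.comp_apply]
  linear_combination (x ^ 2 * exp (-x * cosh t) * cosh (ν * t)) * cosh_sq_sub_sinh_sq t

lemma tendsto_besselODEPrimitive {x : ℝ} (hx : 0 < x) :
    Tendsto (besselODEPrimitive ν x) atTop (𝓝 0) := by
  have hlim := ((tendsto_besselKIntegrand ν 1 hx).norm.const_mul x).add
    ((tendsto_besselKIntegrand ν 0 hx).norm.const_mul |ν|)
  rw [norm_zero, mul_zero, mul_zero, add_zero] at hlim
  refine squeeze_zero_norm (fun t => ?_) hlim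
  have hsum : |x * sinh t * cosh (ν * t) + ν * sinh (ν * t)|
      ≤ x * cosh t * cosh (ν * t) + |ν| * cosh (ν * t) := by
    refine (abs_add_le _ _).trans ?_
    rw [abs_mul, abs_mul, abs_mul, abs_of_pos hx, abs_of_pos (cosh_pos _)]
    gcongr <;> exact abs_sinh_le_cosh _
  simp only [Real.norm_eq_abs, besselODEPrimitive, abs_mul, abs_exp, abs_besselKIntegrand]
  calc exp (-x * cosh t) * |x * sinh t * cosh (ν * t) + ν * sinh (ν * t)|
      ≤ exp (-x * cosh t) * (x * cosh t * cosh (ν * t) + |ν| * cosh (ν * t)) := by gcongr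
    _ = _ := by ring

lemma besselKDeriv_ode {x : ℝ} (hx : 0 < x) :
    x ^ 2 * besselKDeriv ν 2 x + x * besselKDeriv ν 1 x - (x ^ 2 + ν ^ 2) * besselKDeriv ν 0 x
      = 0 := by
  have hint (n : ℕ) := integrableOn_besselKIntegrand ν n hx
  have hftc := integral_Ioi_of_hasDerivAt_of_tendsto'
    (fun t _ => hasDerivAt_besselODEPrimitive ν x t)
    ((((hint 2).const_mul _).add ((hint 1).const_mul _)).sub ((hint 0).const_mul _)).neg
    (tendsto_besselODEPrimitive ν hx)
  rw [integral_neg, integral_sub, integral_add, integral_const_mul, integral_const_mul,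
    integral_const_mul] at hftc
  · have hG₀ : besselODEPrimitive ν x 0 = 0 := by simp [besselODEPrimitive]
    rw [hG₀] at hftc
    unfold besselKDeriv
    linarith
  all_goals first
    | exact (hint _).const_mul _
    | exact ((hint 2).const_mul _).add ((hint 1).const_mul _)

lemma exp_neg_mul_cosh_one_le_besselKDeriv {x : ℝ} (hx : 0 < x) :
    exp (-x * cosh 1) ≤ besselKDeriv ν 0 x := by
  have hint := integrableOn_besselKIntegrand ν 0 hx
  calc exp (-x * cosh 1) = ∫ _ in Ioc (0 : ℝ) 1, exp (-x * cosh 1) := by simp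
    _ ≤ ∫ t in Ioc (0 : ℝ) 1, besselKIntegrand ν 0 x t := by
        refine setIntegral_mono_on (integrableOn_const (by simp) (by simp))
          (hint.mono_set Ioc_subset_Ioi_self) measurableSet_Ioc fun t ht => ?_
        have hcosh : cosh t ≤ cosh 1 := by
          rw [cosh_le_cosh, abs_of_pos ht.1, abs_one]; exact ht.2
        rw [besselKIntegrand, pow_zero, one_mul]
        calc exp (-x * cosh 1) ≤ exp (-x * cosh t) := exp_le_exp.2 (by nlinarith)
          _ ≤ exp (-x * cosh t) * cosh (ν * t) :=
            le_mul_of_one_le_right (exp_pos _).le (one_le_cosh _)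
    _ ≤ besselKDeriv ν 0 x := setIntegral_mono_set hint
        (ae_of_all _ fun t => by unfold besselKIntegrand; positivity)
        Ioc_subset_Ioi_self.eventuallyLE

lemma besselKDeriv_zero_le {x : ℝ} (hx : 1 ≤ x) :
    besselKDeriv ν 0 x ≤ (∫ t in Ioi 0, exp (|ν| * t - 1 / 2 * t ^ 2)) * exp (-x) := by
  rw [mul_comm, ← integral_const_mul]
  refine setIntegral_mono_on (integrableOn_besselKIntegrand ν 0 (by linarith))
    ((integrable_exp_mul_sub_mul_sq (by norm_num) _).const_mul _).integrableOn
    measurableSet_Ioi fun t ht => ?_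
  simpa using (le_abs_self _).trans
    (abs_besselKIntegrand_le ν 0 zero_le_one hx (le_of_lt ht))

end besselKDeriv

lemma eq_of_hasDerivAt_eq_zero_Ioi {E : Type*} [NormedAddCommGroup E] [NormedSpace ℝ E]
    {F : ℝ → E} (hF : ∀ w, 0 < w → HasDerivAt F 0 w) {a b : ℝ} (ha : 0 < a) (hb : 0 < b) :
    F a = F b :=
  isOpen_Ioi.is_const_of_deriv_eq_zero isPreconnected_Ioi
    (fun w hw => (hF w hw).differentiableAt.differentiableWithinAt) (fun w hw => (hF w hw).deriv)
    ha hb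

def IsModifiedBesselSolution (ν : ℝ) (y y' y'' : ℝ → ℂ) : Prop :=
  ∀ w : ℝ, 0 < w → HasDerivAt y (y' w) w ∧ HasDerivAt y' (y'' w) w ∧
    (w : ℂ) ^ 2 * y'' w + w * y' w - ((w : ℂ) ^ 2 + (ν : ℂ) ^ 2) * y w = 0

lemma isModifiedBesselSolution_of_contDiffOn {ν : ℝ} {f : ℝ → ℂ}
    (hf : ContDiffOn ℝ 2 f (Ioi 0))
    (hode : ∀ w : ℝ, 0 < w → (w : ℂ) ^ 2 * deriv (deriv f) w + (w : ℂ) * deriv f w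
      - ((w : ℂ) ^ 2 + (ν : ℂ) ^ 2) * f w = 0) :
    IsModifiedBesselSolution ν f (deriv f) (deriv (deriv f)) := by
  intro w hw
  have hf' : ContDiffOn ℝ 1 (deriv f) (Ioi 0) := hf.deriv_of_isOpen isOpen_Ioi (by norm_num)
  have hw' := Ioi_mem_nhds hw
  exact ⟨((hf.differentiableOn two_ne_zero w hw).differentiableAt hw').hasDerivAt,
    ((hf'.differentiableOn one_ne_zero w hw).differentiableAt hw').hasDerivAt, hode w hw⟩

namespace IsModifiedBesselSolution

variable {ν : ℝ} {y₁ y₁' y₁'' y₂ y₂' y₂'' : ℝ → ℂ}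

theorem mul_wronskian_eq (h₁ : IsModifiedBesselSolution ν y₁ y₁' y₁'')
    (h₂ : IsModifiedBesselSolution ν y₂ y₂' y₂'') {w : ℝ} (hw : 0 < w) :
    w * (y₁ w * y₂' w - y₁' w * y₂ w) = y₁ 1 * y₂' 1 - y₁' 1 * y₂ 1 := by
  have hderiv : ∀ w : ℝ, 0 < w →
      HasDerivAt (fun w : ℝ => (w : ℂ) * (y₁ w * y₂' w - y₁' w * y₂ w)) 0 w := by
    intro w hw
    obtain ⟨d₁, d₁', e₁⟩ := h₁ w hw
    obtain ⟨d₂, d₂', e₂⟩ := h₂ w hw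
    refine ((hasDerivAt_id w).ofReal_comp.mul ((d₁.mul d₂').sub (d₁'.mul d₂))).congr_deriv ?_
    apply mul_right_cancel₀ (show (w : ℂ) ≠ 0 by exact_mod_cast hw.ne')
    simp only [Pi.mul_apply, Pi.sub_apply, id, Complex.ofReal_one]
    linear_combination y₁ w * e₂ - y₂ w * e₁
  simpa using eq_of_hasDerivAt_eq_zero_Ioi hderiv hw one_pos

theorem hasDerivAt_div (h₁ : IsModifiedBesselSolution ν y₁ y₁' y₁'')
    (h₂ : IsModifiedBesselSolution ν y₂ y₂' y₂'') {w : ℝ} (hw : 0 < w) (hy₂ : y₂ w ≠ 0) :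
    HasDerivAt (fun t => y₁ t / y₂ t) ((y₂ 1 * y₁' 1 - y₂' 1 * y₁ 1) / (w * y₂ w ^ 2)) w := by
  refine ((h₁ w hw).1.div (h₂ w hw).1 hy₂).congr_deriv ?_
  have hw' : (w : ℂ) ≠ 0 := by exact_mod_cast hw.ne'
  rw [← h₂.mul_wronskian_eq h₁ hw]
  field_simp

end IsModifiedBesselSolution

section besselK

variable (ν : ℝ)

lemma besselK_ofReal_eq (x : ℝ) : besselK ν x = besselKDeriv ν 0 x := by
  rw [besselK, besselKDeriv, ← integral_complex_ofReal]
  refine integral_congr_ae (ae_of_all _ fun t => ?_)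
  simp [besselKIntegrand]

lemma isModifiedBesselSolution_besselKDeriv :
    IsModifiedBesselSolution ν (fun x => besselKDeriv ν 0 x) (fun x => besselKDeriv ν 1 x)
      (fun x => besselKDeriv ν 2 x) := fun _ hw =>
  ⟨(hasDerivAt_besselKDeriv ν 0 hw).ofReal_comp, (hasDerivAt_besselKDeriv ν 1 hw).ofReal_comp,
    by beta_reduce; exact_mod_cast besselKDeriv_ode ν hw⟩

lemma norm_div_besselKDeriv_le (z : ℂ) {x : ℝ} (hx : 0 < x) :
    ‖z / besselKDeriv ν 0 x‖ ≤ ‖z‖ * exp (cosh 1 * x) := by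
  have hK := exp_neg_mul_cosh_one_le_besselKDeriv ν hx
  have hK_pos := (exp_pos _).trans_le hK
  rw [norm_div, Complex.norm_real, Real.norm_of_nonneg hK_pos.le, div_le_iff₀ hK_pos]
  calc ‖z‖ = ‖z‖ * exp (cosh 1 * x) * exp (-x * cosh 1) := by
        rw [mul_assoc, ← exp_add]; ring_nf; simp
    _ ≤ ‖z‖ * exp (cosh 1 * x) * besselKDeriv ν 0 x := by gcongr

end besselK

lemma norm_mul_le_norm_sub_of_hasDerivAt {q : ℝ → ℂ} {h : ℝ → ℝ} {A : ℂ} {a b m : ℝ}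
    (hab : a ≤ b) (hq : ∀ t ∈ Icc a b, HasDerivAt q (A * h t) t)
    (hh : ContinuousOn h (Icc a b)) (hm : ∀ t ∈ Icc a b, m ≤ h t) :
    ‖A‖ * (m * (b - a)) ≤ ‖q b - q a‖ := by
  have hint : IntervalIntegrable h volume a b := hh.intervalIntegrable_of_Icc hab
  have hftc : q b - q a = A * ↑(∫ t in a..b, h t) := by
    rw [← intervalIntegral.integral_ofReal, ← intervalIntegral.integral_const_mul]
    exact (intervalIntegral.integral_eq_sub_of_hasDerivAt
      (fun t ht => hq t (by rwa [uIcc_of_le hab] at ht)) ((continuousOn_const.mul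
        (Complex.continuous_ofReal.comp_continuousOn hh)).intervalIntegrable_of_Icc hab)).symm
  have hlow : m * (b - a) ≤ ∫ t in a..b, h t := by
    simpa [mul_comm] using intervalIntegral.integral_mono_on hab intervalIntegrable_const hint hm
  rw [hftc, norm_mul, Complex.norm_real, Real.norm_eq_abs]
  gcongr
  exact hlow.trans (le_abs_self _)

lemma tendsto_mul_one_add_rpow_mul_exp_neg_mul_atTop (N : ℝ) {b : ℝ} (hb : 0 < b) :
    Tendsto (fun w : ℝ => w * (1 + w) ^ N * exp (-b * w)) atTop (𝓝 0) := by
  have h := ((tendsto_rpow_mul_exp_neg_mul_atTop_nhds_zero (N + 1) b hb).comp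
    (tendsto_atTop_add_const_left atTop 1 tendsto_id)).const_mul (exp b)
  rw [mul_zero] at h
  refine squeeze_zero' (eventually_ge_atTop 0 |>.mono fun w hw => by positivity) ?_ h
  filter_upwards [eventually_ge_atTop 0] with w hw
  have hexp : exp b * exp (-b * (1 + w)) = exp (-b * w) := by rw [← exp_add]; ring_nf
  calc w * (1 + w) ^ N * exp (-b * w) ≤ (1 + w) * (1 + w) ^ N * exp (-b * w) := by
        gcongr; linarith
    _ = exp b * ((1 + w) ^ (N + 1) * exp (-b * (1 + w))) := by
        rw [rpow_add_one (by positivity), ← hexp]; ring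

theorem eq_zero_of_hasDerivAt_div_mul_sq_of_growth {g : ℝ → ℝ} {q : ℝ → ℂ} {A : ℂ}
    {C M N β : ℝ} (hg : ContinuousOn g (Ici 1)) (hg_pos : ∀ t, 1 ≤ t → 0 < g t)
    (hg_le : ∀ t, 1 ≤ t → g t ≤ C * exp (-t))
    (hq : ∀ t, 1 ≤ t → HasDerivAt q (A / (t * g t ^ 2)) t)
    (hM : 0 ≤ M) (hN : 0 ≤ N) (hβ : 0 ≤ β) (hβ2 : β < 2)
    (hq_le : ∀ t, 1 ≤ t → ‖q t‖ ≤ M * (1 + t) ^ N * exp (β * t)) : A = 0 := by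
  have hC : 0 < C := pos_of_mul_pos_left ((hg_pos 1 le_rfl).trans_le (hg_le 1 le_rfl))
    (exp_pos _).le
  have key : ∀ w, 2 ≤ w →
      ‖A‖ * C⁻¹ ^ 2 ≤ 2 * M * exp 2 * (w * (1 + w) ^ N * exp (-(2 - β) * w)) := by
    intro w hw
    have hIcc : Icc (w - 1) w ⊆ Ici 1 := fun t ht => by simp only [mem_Ici]; linarith [ht.1]
    have hlow := norm_mul_le_norm_sub_of_hasDerivAt (q := q) (h := fun t => (t * g t ^ 2)⁻¹)
      (m := (w * (C * exp (-(w - 1))) ^ 2)⁻¹) (by linarith)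
      (fun t ht => by simpa [div_eq_mul_inv] using hq t (hIcc ht))
      ((continuousOn_id.mul ((hg.mono hIcc).pow 2)).inv₀ fun t ht =>
        (mul_pos ((by linarith : (0 : ℝ) < w - 1).trans_le ht.1)
          (pow_pos (hg_pos t (hIcc ht)) 2)).ne')
      (fun t ht => by
        have ht0 : 0 < t := by linarith [ht.1]
        have hgt := hg_pos t (hIcc ht)
        gcongr
        · exact ht.2
        · exact (hg_le t (hIcc ht)).trans (by gcongr; exact ht.1))
    rw [sub_sub_cancel, mul_one] at hlow
    have hup : ‖q w - q (w - 1)‖ ≤ 2 * M * (1 + w) ^ N * exp (β * w) := by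
      have h₁ := hq_le w (by linarith)
      have h₂ : ‖q (w - 1)‖ ≤ M * (1 + w) ^ N * exp (β * w) :=
        (hq_le (w - 1) (by linarith)).trans (by gcongr <;> linarith)
      linarith [norm_sub_le (q w) (q (w - 1))]
    have hexp : exp (β * w) * exp (-(w - 1)) ^ 2 = exp 2 * exp (-(2 - β) * w) := by
      rw [sq, ← exp_add, ← exp_add, ← exp_add]; ring_nf
    calc ‖A‖ * C⁻¹ ^ 2
        = ‖A‖ * (w * (C * exp (-(w - 1))) ^ 2)⁻¹ * (w * exp (-(w - 1)) ^ 2) := by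
          field_simp
      _ ≤ 2 * M * (1 + w) ^ N * exp (β * w) * (w * exp (-(w - 1)) ^ 2) :=
          mul_le_mul_of_nonneg_right (hlow.trans hup) (by positivity)
      _ = 2 * M * exp 2 * (w * (1 + w) ^ N * exp (-(2 - β) * w)) := by
          linear_combination (2 * M * (1 + w) ^ N * w) * hexp
  have hlim := (tendsto_mul_one_add_rpow_mul_exp_neg_mul_atTop N
    (by linarith : 0 < 2 - β)).const_mul (2 * M * exp 2)
  rw [mul_zero] at hlim
  have hA : ‖A‖ * C⁻¹ ^ 2 ≤ 0 := ge_of_tendsto hlim (eventually_atTop.2 ⟨2, key⟩)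
  exact norm_le_zero_iff.1 (nonpos_of_mul_nonpos_left hA (by positivity))

/-- Let `ν ∈ ℝ` and let `f : (0, ∞) → ℂ` be twice continuously differentiable with
`w²f''(w) + wf'(w) − (w² + ν²)f(w) = 0` for all `w > 0`, and suppose `f` has moderate
growth: `|f(w)| ≤ C(1 + w)^N` for some `C, N > 0`.  Then `f = c·K_ν` on `(0, ∞)` for
some constant `c ∈ ℂ`. -/
theorem moderate_growth_bessel_solution (ν : ℝ) (f : ℝ → ℂ)
    (hf : ContDiffOn ℝ 2 f (Set.Ioi 0))
    (hode : ∀ w : ℝ, 0 < w →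
      (w : ℂ) ^ 2 * deriv (deriv f) w + (w : ℂ) * deriv f w
        - ((w : ℂ) ^ 2 + (ν : ℂ) ^ 2) * f w = 0)
    (hgrowth : ∃ C N : ℝ, 0 < C ∧ 0 < N ∧ ∀ w : ℝ, 0 < w → ‖f w‖ ≤ C * (1 + w) ^ N) :
    ∃ c : ℂ, ∀ w : ℝ, 0 < w → f w = c * besselK (ν : ℂ) w := by
  obtain ⟨C, N, hC, hN, hgrowth⟩ := hgrowth
  set K := besselKDeriv ν 0
  have hK_pos (w : ℝ) (hw : 0 < w) : 0 < K w :=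
    (exp_pos _).trans_le (exp_neg_mul_cosh_one_le_besselKDeriv ν hw)
  have hq (w : ℝ) (hw : 0 < w) := (isModifiedBesselSolution_of_contDiffOn hf hode).hasDerivAt_div
    (isModifiedBesselSolution_besselKDeriv ν) hw (Complex.ofReal_ne_zero.2 (hK_pos w hw).ne')
  have hA := eq_zero_of_hasDerivAt_div_mul_sq_of_growth (g := K) (q := fun t => f t / K t)
    ((continuousOn_besselKDeriv ν 0).mono (Ici_subset_Ioi.2 one_pos))
    (fun t ht => hK_pos t (by linarith)) (fun t ht => besselKDeriv_zero_le ν ht)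
    (fun t ht => hq t (by linarith)) hC.le hN.le (cosh_pos 1).le cosh_one_lt_two
    (fun t ht => (norm_div_besselKDeriv_le ν (f t) (by linarith)).trans
      (by gcongr; exact hgrowth t (by linarith)))
  refine ⟨f 1 / K 1, fun w hw => ?_⟩
  have hconst := eq_of_hasDerivAt_eq_zero_Ioi (fun t ht => by simpa [hA] using hq t ht) hw one_pos
  rw [besselK_ofReal_eq, ← hconst, div_mul_cancel₀ _ (Complex.ofReal_ne_zero.2 (hK_pos w hw).ne')]
end

section
/- For all real r, y > 0 and all s ∈ ℂ with Re(s) > 1/2, one has (Γ(s) / (2Γ(1/2))) · ∫_ℝ e^{irx} (x² + y²)^{−s} dx = (r/(2y))^{s − 1/2} · K_{s − 1/2}(ry). -/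
set_option autoImplicit false

/-!
Write `Γ(s) (x² + y²)^{-s} = ∫₀^∞ t^{s-1} e^{-(x² + y²) t} dt`. For `Re s > 1/2` the resulting
double integral converges absolutely, so the integrals may be exchanged, and the `x`-integral is
the Fourier transform of a Gaussian, `√(π/t) e^{-r²/(4t)}`. This leaves
`√π ∫₀^∞ t^{ν-1} e^{-(y² t + r²/(4t))} dt` with `ν = s - 1/2`, and the substitution
`t = (r/(2y)) eᵘ` turns the exponent into `-r y cosh u`, giving
`√π (r/(2y))^ν ∫_ℝ e^{νu} e^{-r y cosh u} du = 2 √π (r/(2y))^ν K_ν(r y)`.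
-/

open MeasureTheory Set Complex
open scoped Real

lemma integrable_rpow_neg_sq_add_sq {y : ℝ} (hy : y ≠ 0) {σ : ℝ} (hσ : 1 / 2 < σ) :
    Integrable fun x : ℝ => (x ^ 2 + y ^ 2) ^ (-σ) := by
  have hbase : Integrable fun x : ℝ => (1 + x ^ 2) ^ (-σ) := by
    simpa [sq_abs, show -(2 * σ) / 2 = -σ by ring] using
      integrable_rpow_neg_one_add_norm_sq (E := ℝ) (r := 2 * σ) (by simp; linarith)
  set m := min 1 (y ^ 2)
  have hm : 0 < m := lt_min one_pos (by positivity)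
  refine (hbase.const_mul (m ^ (-σ))).mono'
    (Measurable.aestronglyMeasurable (by fun_prop)) (.of_forall fun x => ?_)
  have hle : m * (1 + x ^ 2) ≤ x ^ 2 + y ^ 2 := by
    nlinarith [min_le_left 1 (y ^ 2), min_le_right 1 (y ^ 2), sq_nonneg x]
  rw [Real.norm_of_nonneg (by positivity), ← Real.mul_rpow hm.le (by positivity)]
  exact Real.rpow_le_rpow_of_nonpos (by positivity) hle (by linarith)

lemma integrableOn_cpow_mul_exp_neg_mul_Ioi {s : ℂ} (hs : 0 < s.re) {A : ℝ} (hA : 0 < A) :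
    IntegrableOn (fun t : ℝ => (t : ℂ) ^ (s - 1) * cexp (-(A * t))) (Ioi 0) := by
  by_contra h
  have hGamma := integral_cpow_mul_exp_neg_mul_Ioi hs hA
  rw [integral_undef h] at hGamma
  simp [Gamma_ne_zero_of_re_pos hs, hA.ne'] at hGamma

lemma Gamma_mul_ofReal_cpow_neg_eq_integral {s : ℂ} (hs : 0 < s.re) {A : ℝ} (hA : 0 < A) :
    Gamma s * (A : ℂ) ^ (-s) = ∫ t in Ioi (0 : ℝ), (t : ℂ) ^ (s - 1) * cexp (-(A * t)) := by
  rw [integral_cpow_mul_exp_neg_mul_Ioi hs hA, one_div,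
    inv_cpow _ _ (by simp [arg_ofReal_of_nonneg hA.le, Real.pi_ne_zero.symm]), ← cpow_neg,
    mul_comm]

lemma integrable_cexp_I_mul_mul_cpow_mul_cexp_neg_sq_add_sq_mul (r : ℝ) {y : ℝ} (hy : y ≠ 0)
    {s : ℂ} (hs : 1 / 2 < s.re) :
    Integrable (Function.uncurry fun x t : ℝ =>
        cexp (I * r * x) * ((t : ℂ) ^ (s - 1) * cexp (-(((x ^ 2 + y ^ 2 : ℝ) : ℂ) * t))))
      (volume.prod (volume.restrict (Ioi 0))) := by
  have hs0 : 0 < s.re := by linarith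
  have hA (x : ℝ) : 0 < x ^ 2 + y ^ 2 := by positivity
  have hnorm (x : ℝ) : ∫ t in Ioi (0 : ℝ), ‖cexp (I * r * x) *
      ((t : ℂ) ^ (s - 1) * cexp (-(((x ^ 2 + y ^ 2 : ℝ) : ℂ) * t)))‖
        = (x ^ 2 + y ^ 2) ^ (-s.re) * Real.Gamma s.re := by
    rw [Real.rpow_neg (hA x).le, ← Real.inv_rpow (hA x).le, ← one_div,
      ← Real.integral_rpow_mul_exp_neg_mul_Ioi hs0 (hA x)]
    refine setIntegral_congr_fun measurableSet_Ioi fun t ht => ?_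
    rw [norm_mul, norm_mul, norm_exp, norm_exp, norm_cpow_eq_rpow_re_of_pos ht, ← ofReal_mul,
      ← ofReal_neg, ofReal_re]
    simp
  refine (integrable_prod_iff (Measurable.aestronglyMeasurable (by fun_prop))).mpr
    ⟨.of_forall fun x => ?_, ?_⟩
  · exact (integrableOn_cpow_mul_exp_neg_mul_Ioi hs0 (hA x)).const_mul (cexp (I * r * x))
  · simpa only [Function.uncurry_apply_pair, hnorm] using
      (integrable_rpow_neg_sq_add_sq hy hs).mul_const _

lemma integral_cexp_I_mul_mul_cexp_neg_sq_add_sq_mul (r y : ℝ) {t : ℝ} (ht : 0 < t) :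
    ∫ x : ℝ, cexp (I * r * x) * cexp (-(((x ^ 2 + y ^ 2 : ℝ) : ℂ) * t))
      = (π : ℂ) ^ (1 / 2 : ℂ) * (t : ℂ) ^ (-(1 / 2) : ℂ) *
          rexp (-(y ^ 2 * t + r ^ 2 / 4 / t)) := by
  have hsplit (x : ℝ) : cexp (I * r * x) * cexp (-(((x ^ 2 + y ^ 2 : ℝ) : ℂ) * t))
      = cexp (-(y ^ 2 * t : ℝ)) * (cexp (I * r * x) * cexp (-t * x ^ 2)) := by
    rw [← exp_add, ← exp_add, ← exp_add]
    push_cast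
    ring_nf
  have hexp : cexp (-(y ^ 2 * t : ℝ)) * cexp (-(r : ℂ) ^ 2 / (4 * t))
      = rexp (-(y ^ 2 * t + r ^ 2 / 4 / t)) := by
    rw [← exp_add, ofReal_exp]
    push_cast
    ring_nf
  simp_rw [hsplit]
  rw [integral_const_mul, fourierIntegral_gaussian (by simpa using ht) (r : ℂ),
    div_cpow_ofReal_nonneg Real.pi_pos.le ht.le, cpow_neg, ← hexp]
  ring

lemma integral_cexp_I_mul_mul_cpow_mul_cexp_neg_sq_add_sq_mul (r y : ℝ) (s : ℂ) {t : ℝ}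
    (ht : 0 < t) :
    ∫ x : ℝ, cexp (I * r * x) * ((t : ℂ) ^ (s - 1) * cexp (-(((x ^ 2 + y ^ 2 : ℝ) : ℂ) * t)))
      = (π : ℂ) ^ (1 / 2 : ℂ) *
          ((t : ℂ) ^ (s - 1 / 2 - 1) * rexp (-(y ^ 2 * t + r ^ 2 / 4 / t))) := by
  have hpow : (t : ℂ) ^ (s - 1) * (t : ℂ) ^ (-(1 / 2) : ℂ) = (t : ℂ) ^ (s - 1 / 2 - 1) := by
    rw [← cpow_add _ _ (ofReal_ne_zero.mpr ht.ne')]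
    ring_nf
  simp_rw [mul_left_comm (cexp _)]
  rw [integral_const_mul, integral_cexp_I_mul_mul_cexp_neg_sq_add_sq_mul r y ht, ← hpow]
  ring

lemma Real.one_add_sq_div_two_le_cosh_s7 (u : ℝ) : 1 + u ^ 2 / 2 ≤ Real.cosh u := by
  have hsinh : (u / 2) ^ 2 ≤ Real.sinh (u / 2) ^ 2 := by
    rcases le_total 0 u with hu | hu
    · nlinarith [Real.self_le_sinh_iff.mpr (by linarith : 0 ≤ u / 2)]
    · nlinarith [Real.sinh_le_self_iff.mpr (by linarith : u / 2 ≤ 0)]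
  have hcosh := Real.cosh_two_mul (u / 2)
  rw [mul_div_cancel₀ u two_ne_zero, Real.cosh_sq] at hcosh
  nlinarith

lemma integrable_cexp_mul_exp_neg_mul_cosh (ν : ℂ) {a : ℝ} (ha : 0 < a) :
    Integrable fun u : ℝ => cexp (ν * u) * (rexp (-a * Real.cosh u) : ℂ) := by
  have hgauss : Integrable fun u : ℝ =>
      cexp (((-(a / 2) : ℝ) : ℂ) * u ^ 2 + ν.re * u + ((-a : ℝ) : ℂ)) :=
    integrable_cexp_quadratic' (by simpa using ha) _ _
  refine hgauss.norm.mono' (by fun_prop) (.of_forall fun u => ?_)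
  rw [norm_mul, norm_exp, norm_exp, norm_real, Real.norm_of_nonneg (Real.exp_pos _).le,
    ← Real.exp_add]
  gcongr
  have hre : (((-(a / 2) : ℝ) : ℂ) * u ^ 2 + ν.re * u + ((-a : ℝ) : ℂ)).re
      = -(a / 2) * u ^ 2 + ν.re * u - a := by
    simp [← ofReal_pow]
    ring
  rw [hre, re_mul_ofReal]
  nlinarith [Real.one_add_sq_div_two_le_cosh_s7 u]

lemma integral_cexp_mul_exp_neg_mul_cosh (ν : ℂ) {a : ℝ} (ha : 0 < a) :
    ∫ u : ℝ, cexp (ν * u) * (rexp (-a * Real.cosh u) : ℂ) = 2 * besselK ν a := by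
  set g : ℝ → ℂ := fun u => cexp (ν * u) * (rexp (-a * Real.cosh u) : ℂ)
  have hg : Integrable g := integrable_cexp_mul_exp_neg_mul_cosh ν ha
  have hreflect : ∫ u in Iic 0, g u = ∫ u in Ioi 0, g (-u) := by
    rw [integral_comp_neg_Ioi, neg_zero]
  rw [← intervalIntegral.integral_Iic_add_Ioi hg.integrableOn hg.integrableOn, hreflect,
    ← integral_add hg.comp_neg.integrableOn hg.integrableOn, besselK, ← integral_const_mul]
  refine setIntegral_congr_fun measurableSet_Ioi fun u _ => ?_
  simp only [g, Complex.cosh, Real.cosh_neg, ofReal_neg, mul_neg]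
  ring

lemma integral_Ioi_eq_integral_mul_exp {E : Type*} [NormedAddCommGroup E] [NormedSpace ℝ E]
    {c : ℝ} (hc : 0 < c) (g : ℝ → E) :
    ∫ t in Ioi 0, g t = ∫ u : ℝ, (c * rexp u) • g (c * rexp u) := by
  have hderiv (u : ℝ) (_ : u ∈ univ) :
      HasDerivWithinAt (fun u => c * rexp u) (c * rexp u) univ u :=
    ((Real.hasDerivAt_exp u).const_mul c).hasDerivWithinAt
  have hinj : InjOn (fun u => c * rexp u) univ := fun p _ q _ h =>
    Real.exp_injective (mul_left_cancel₀ hc.ne' h)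
  have himage : (fun u => c * rexp u) '' univ = Ioi 0 := by
    ext t
    refine ⟨fun ⟨u, _, hu⟩ => hu ▸ mem_Ioi.mpr (by positivity),
      fun ht => ⟨Real.log (t / c), trivial, ?_⟩⟩
    show c * rexp (Real.log (t / c)) = t
    rw [Real.exp_log (div_pos ht hc)]
    field_simp
  simpa [himage, abs_of_pos hc, (Real.exp_pos _).le] using
    integral_image_eq_integral_abs_deriv_smul MeasurableSet.univ hderiv hinj g

lemma ofReal_exp_cpow (u : ℝ) (ν : ℂ) : (rexp u : ℂ) ^ ν = cexp (ν * u) := by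
  rw [cpow_def_of_ne_zero (ofReal_ne_zero.mpr (Real.exp_pos u).ne'),
    ← ofReal_log (Real.exp_pos u).le, Real.log_exp, mul_comm]

theorem integral_cpow_mul_exp_neg_mul_add_div (ν : ℂ) {a b : ℝ} (ha : 0 < a) (hb : 0 < b) :
    ∫ t in Ioi (0 : ℝ), (t : ℂ) ^ (ν - 1) * (rexp (-(a * t + b / t)) : ℂ)
      = 2 * ((√(b / a) : ℝ) : ℂ) ^ ν * besselK ν (2 * √(a * b)) := by
  set c := √(b / a)
  have hc : 0 < c := Real.sqrt_pos.mpr (div_pos hb ha)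
  have hac : a * c ^ 2 = b := by
    rw [Real.sq_sqrt (div_pos hb ha).le]
    field_simp
  have harg : 2 * √(a * b) = 2 * a * c := by
    rw [← hac, show a * (a * c ^ 2) = (a * c) ^ 2 by ring, Real.sqrt_sq (by positivity)]
    ring
  rw [integral_Ioi_eq_integral_mul_exp hc, harg, mul_right_comm,
    ← integral_cexp_mul_exp_neg_mul_cosh ν (by positivity), ← integral_mul_const]
  refine integral_congr_ae (.of_forall fun u => ?_)
  have hT : ((c * rexp u : ℝ) : ℂ) ≠ 0 := ofReal_ne_zero.mpr (by positivity)
  have hcosh : a * (c * rexp u) + b / (c * rexp u) = 2 * a * c * Real.cosh u := by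
    rw [← hac, Real.cosh_eq, Real.exp_neg]
    field_simp
  have hpow : ((c * rexp u : ℝ) : ℂ) ^ ν = (c : ℂ) ^ ν * cexp (ν * u) := by
    rw [ofReal_mul, mul_cpow_ofReal_nonneg hc.le (Real.exp_pos u).le, ofReal_exp_cpow]
  dsimp only
  rw [hcosh, neg_mul_eq_neg_mul, real_smul, cpow_sub _ _ hT, cpow_one, hpow]
  field_simp

/-- For all real `r, y > 0` and all `s ∈ ℂ` with `Re(s) > 1/2`,
`(Γ(s)/(2Γ(1/2))) ∫_ℝ e^{irx}(x² + y²)^{−s} dx = (r/(2y))^{s−1/2} K_{s−1/2}(ry)`. -/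
theorem fourier_transform_besselK (r y : ℝ) (hr : 0 < r) (hy : 0 < y) (s : ℂ)
    (hs : 1 / 2 < s.re) :
    (Complex.Gamma s / (2 * Complex.Gamma (1 / 2))) *
        ∫ x : ℝ, Complex.exp (Complex.I * (r : ℂ) * (x : ℂ)) * ((x ^ 2 + y ^ 2 : ℝ) : ℂ) ^ (-s)
      = ((r / (2 * y) : ℝ) : ℂ) ^ (s - 1 / 2) * besselK (s - 1 / 2) (r * y) := by
  have hscale : √(r ^ 2 / 4 / y ^ 2) = r / (2 * y) := by
    rw [show r ^ 2 / 4 / y ^ 2 = (r / (2 * y)) ^ 2 by ring, Real.sqrt_sq (by positivity)]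
  have harg : 2 * √(y ^ 2 * (r ^ 2 / 4)) = r * y := by
    rw [show y ^ 2 * (r ^ 2 / 4) = (r * y / 2) ^ 2 by ring, Real.sqrt_sq (by positivity)]
    ring
  have hlaplace : Gamma s * ∫ x : ℝ, cexp (I * r * x) * ((x ^ 2 + y ^ 2 : ℝ) : ℂ) ^ (-s)
      = (π : ℂ) ^ (1 / 2 : ℂ) *
          (2 * ((r / (2 * y) : ℝ) : ℂ) ^ (s - 1 / 2) * besselK (s - 1 / 2) (r * y)) := calc
    _ = ∫ x : ℝ, ∫ t in Ioi (0 : ℝ),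
          cexp (I * r * x) * ((t : ℂ) ^ (s - 1) * cexp (-(((x ^ 2 + y ^ 2 : ℝ) : ℂ) * t))) := by
      rw [← integral_const_mul]
      refine integral_congr_ae (.of_forall fun x => ?_)
      dsimp only
      rw [mul_left_comm, Gamma_mul_ofReal_cpow_neg_eq_integral (by linarith) (by positivity),
        integral_const_mul]
    _ = ∫ t in Ioi (0 : ℝ), ∫ x : ℝ,
          cexp (I * r * x) * ((t : ℂ) ^ (s - 1) * cexp (-(((x ^ 2 + y ^ 2 : ℝ) : ℂ) * t))) :=
      integral_integral_swap
        (integrable_cexp_I_mul_mul_cpow_mul_cexp_neg_sq_add_sq_mul r hy.ne' hs)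
    _ = _ := by
      rw [setIntegral_congr_fun measurableSet_Ioi fun t ht =>
          integral_cexp_I_mul_mul_cpow_mul_cexp_neg_sq_add_sq_mul r y s ht,
        integral_const_mul,
        integral_cpow_mul_exp_neg_mul_add_div _ (by positivity) (by positivity), hscale, harg]
  rw [Gamma_one_half_eq, div_mul_eq_mul_div, hlaplace]
  field_simp
end

section
/- Let x ∈ ℝ, y, w > 0, set z = x + iy, and let m = [[1, x],[0, 1]]·[[y^{1/2}, 0],[0, y^{−1/2}]]·[[w, 0],[0, w]] ∈ GL₂(ℝ). Let a, b, c, d ∈ ℝ, set ω = −(a, b/3, c/3, d) and p(t) = at³ + bt² + ct + d. Then: (i) m·(u − iv)³ = w·y^{−3/2}·(u − zv)³; (ii) ⟨ω, m·(−v + iu)³⟩ = −i·w·y^{−3/2}·p(z̄); (iii) ⟨ω, m·(−v − iu)³⟩ = i·w·y^{−3/2}·p(z); (iv) ⟨ω, m·3(−v − iu)²(−v + iu)⟩ = −w·y^{−3/2}·(2y·p'(z) + 3i·p(z)); (v) ⟨ω, m·3(−v + iu)²(−v − iu)⟩ = −w·y^{−3/2}·(2y·p'(z̄) − 3i·p(z̄)).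 -/
set_option autoImplicit false

/-!
The matrix `m` is upper triangular, so `m⁻¹` turns every linear form `u - s v` into a multiple
of `u - (x + y s) v`: on roots, `m` acts by the Möbius map `s ↦ x + y s`, which sends `i` to `z`
and `-i` to `z̄`. Each of the five cubics is a constant times `(u - s v)² (u - t v)` with
`s, t ∈ {i, -i}`, and the constants produced by `m` collect to `w y^{-3/2}`. Pairing
`ω = -(a, b/3, c/3, d)` with the coefficients of `(u - s v)² (u - t v)` gives the polar form of
`p` at `(s, s, t)`, which is `p(s) + (t - s) p'(s) / 3`.
-/

noncomputable section

/-- The action of `m ∈ GL₂(ℝ)` on binary cubics (as functions of `(u, v) ∈ ℂ²`):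
`(m·f)(u, v) = det(m)² · f(m⁻¹(u, v)ᵀ)`. -/
def actGL2 (m : Matrix (Fin 2) (Fin 2) ℝ) (f : ℂ → ℂ → ℂ) : ℂ → ℂ → ℂ := fun u v =>
  ((m.det : ℂ)) ^ 2 *
    f ((m⁻¹ 0 0 : ℝ) * u + (m⁻¹ 0 1 : ℝ) * v) ((m⁻¹ 1 0 : ℝ) * u + (m⁻¹ 1 1 : ℝ) * v)

/-- The binary cubic with coefficient vector `q = (q₀, q₁, q₂, q₃)`:
`q₀u³ + q₁u²v + q₂uv² + q₃v³`. -/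
def cubicEval (q : Fin 4 → ℂ) (u v : ℂ) : ℂ :=
  q 0 * u ^ 3 + q 1 * u ^ 2 * v + q 2 * u * v ^ 2 + q 3 * v ^ 3

/-- The symplectic pairing of two binary cubics with coefficient vectors `(a,b,c,d)`
and `(a',b',c',d')` (i.e. of the quadruples `(a,b/3,c/3,d)` and `(a',b'/3,c'/3,d')`):
`ad' − (1/3)bc' + (1/3)cb' − da'`. -/
def cubicPair (q q' : Fin 4 → ℂ) : ℂ :=
  q 0 * q' 3 - (1 / 3) * q 1 * q' 2 + (1 / 3) * q 2 * q' 1 - q 3 * q' 0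

open Complex

theorem rpow_neg_three_div_two_eq_inv_sqrt_pow {y : ℝ} (hy : 0 ≤ y) :
    y ^ (-(3 : ℝ) / 2) = (√y ^ 3)⁻¹ := by
  rw [Real.sqrt_eq_rpow, ← Real.rpow_natCast, ← Real.rpow_mul hy, ← Real.rpow_neg hy]
  norm_num

theorem deriv_cubic (a b c d t : ℂ) :
    deriv (fun t => a * t ^ 3 + b * t ^ 2 + c * t + d) t = 3 * a * t ^ 2 + 2 * b * t + c := by
  have h := ((((hasDerivAt_pow 3 t).const_mul a).add ((hasDerivAt_pow 2 t).const_mul b)).add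
    ((hasDerivAt_id t).const_mul c)).add_const d
  convert h.deriv using 1
  norm_num
  ring

theorem actGL2_upperTriangular_apply {α β δ : ℝ} (hα : α ≠ 0) (hδ : δ ≠ 0)
    (f : ℂ → ℂ → ℂ) (u v : ℂ) :
    actGL2 !![α, β; 0, δ] f u v
      = ((α * δ : ℝ) : ℂ) ^ 2 * f ((δ * u - β * v) / (α * δ)) (v / δ) := by
  have hinv : (!![α, β; 0, δ])⁻¹ = !![α⁻¹, -β / (α * δ); 0, δ⁻¹] := by
    refine Matrix.inv_eq_right_inv ?_
    ext i j
    fin_cases i <;> fin_cases j <;> simp [Matrix.mul_apply, hα, hδ]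
    field_simp
    ring
  have hαC : (α : ℂ) ≠ 0 := ofReal_ne_zero.2 hα
  have hδC : (δ : ℂ) ≠ 0 := ofReal_ne_zero.2 hδ
  simp only [actGL2, hinv, Matrix.det_fin_two_of, Matrix.of_apply, Matrix.cons_val',
    Matrix.cons_val_zero, Matrix.cons_val_one, Matrix.empty_val', Matrix.cons_val_fin_one]
  congr 2 <;> push_cast <;> field_simp <;> ring

theorem actGL2_upperTriangular_sq_mul {α β δ : ℝ} (hα : α ≠ 0) (hδ : δ ≠ 0)
    (k s t u v : ℂ) :
    actGL2 !![α, β; 0, δ] (fun u v => k * ((u - s * v) ^ 2 * (u - t * v))) u v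
      = k * ((α * δ) ^ 2 / α ^ 3 : ℝ) *
        ((u - (α * s + β) / δ * v) ^ 2 * (u - (α * t + β) / δ * v)) := by
  have hαC : (α : ℂ) ≠ 0 := ofReal_ne_zero.2 hα
  have hδC : (δ : ℂ) ≠ 0 := ofReal_ne_zero.2 hδ
  rw [actGL2_upperTriangular_apply hα hδ]
  push_cast
  field_simp
  ring

theorem actGL2_shear_diagonal_scalar_sq_mul {x y w : ℝ} (hy : 0 < y) (hw : 0 < w)
    (k s t u v : ℂ) :
    actGL2 (!![(1 : ℝ), x; 0, 1] * !![√y, 0; 0, (√y)⁻¹] * !![w, 0; 0, w])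
        (fun u v => k * ((u - s * v) ^ 2 * (u - t * v))) u v
      = k * (w * y ^ (-(3 : ℝ) / 2) : ℝ) *
        ((u - (x + y * s) * v) ^ 2 * (u - (x + y * t) * v)) := by
  have hsqrtC : (√y : ℂ) ≠ 0 := ofReal_ne_zero.2 (Real.sqrt_pos.2 hy).ne'
  have hwC : (w : ℂ) ≠ 0 := ofReal_ne_zero.2 hw.ne'
  have hsqC : (√y : ℂ) ^ 2 = y := by exact_mod_cast Real.sq_sqrt hy.le
  have hscale : ((√y * w) * ((√y)⁻¹ * w)) ^ 2 / (√y * w) ^ 3 = w * y ^ (-(3 : ℝ) / 2) := by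
    rw [rpow_neg_three_div_two_eq_inv_sqrt_pow hy.le]
    field_simp
  have hmobius : ∀ s : ℂ, ((√y * w : ℝ) * s + (x * (√y)⁻¹ * w : ℝ)) / ((√y)⁻¹ * w : ℝ)
      = x + y * s := by
    intro s
    push_cast
    field_simp
    rw [hsqC]
    ring
  have hm : !![(1 : ℝ), x; 0, 1] * !![√y, 0; 0, (√y)⁻¹] * !![w, 0; 0, w]
      = !![√y * w, x * (√y)⁻¹ * w; 0, (√y)⁻¹ * w] := by
    simp
  rw [hm, actGL2_upperTriangular_sq_mul (by positivity) (by positivity), hscale, hmobius, hmobius]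

theorem cubicEval_injective : Function.Injective cubicEval := by
  intro q q' h
  have h10 := congrFun₂ h 1 0
  have h01 := congrFun₂ h 0 1
  have h11 := congrFun₂ h 1 1
  have h1m := congrFun₂ h 1 (-1)
  simp only [cubicEval] at h10 h01 h11 h1m
  ext i
  fin_cases i <;> dsimp
  · linear_combination h10
  · linear_combination (h11 - h1m) / 2 - h01
  · linear_combination (h11 + h1m) / 2 - h10
  · linear_combination h01

theorem cubicPair_neg_coeffs_of_cubicEval_eq {a b c d k s t : ℂ} {p : ℂ → ℂ}
    (hp : p = fun t => a * t ^ 3 + b * t ^ 2 + c * t + d) {q : Fin 4 → ℂ}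
    (hq : ∀ u v, cubicEval q u v = k * ((u - s * v) ^ 2 * (u - t * v))) :
    cubicPair ![-a, -b, -c, -d] q = k * (p s + (t - s) / 3 * deriv p s) := by
  have hcoeffs : q = k • ![1, -(2 * s + t), s ^ 2 + 2 * s * t, -(s ^ 2 * t)] :=
    cubicEval_injective <| funext₂ fun u v => by
      rw [hq]
      simp only [cubicEval, Pi.smul_apply, smul_eq_mul, Matrix.cons_val_zero,
        Matrix.cons_val_one, Matrix.cons_val]
      ring
  subst hcoeffs hp
  simp only [cubicPair, deriv_cubic, Pi.smul_apply, smul_eq_mul, Matrix.cons_val_zero,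
    Matrix.cons_val_one, Matrix.cons_val]
  ring

/-- Let `x ∈ ℝ`, `y, w > 0`, `z = x + iy`,
`m = [[1,x],[0,1]]·[[y^{1/2},0],[0,y^{−1/2}]]·[[w,0],[0,w]]`, `ω = −(a,b/3,c/3,d)`
and `p(t) = at³ + bt² + ct + d`.  Then:
(i) `m·(u − iv)³ = w·y^{−3/2}·(u − zv)³`;
(ii) `⟨ω, m·(−v + iu)³⟩ = −i·w·y^{−3/2}·p(z̄)`;
(iii) `⟨ω, m·(−v − iu)³⟩ = i·w·y^{−3/2}·p(z)`;
(iv) `⟨ω, m·3(−v − iu)²(−v + iu)⟩ = −w·y^{−3/2}·(2y·p'(z) + 3i·p(z))`;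
(v) `⟨ω, m·3(−v + iu)²(−v − iu)⟩ = −w·y^{−3/2}·(2y·p'(z̄) − 3i·p(z̄))`. -/
theorem cubic_action_pairings (x y w : ℝ) (hy : 0 < y) (hw : 0 < w) (a b c d : ℝ)
    (z : ℂ) (hz : z = (x : ℂ) + Complex.I * (y : ℂ))
    (m : Matrix (Fin 2) (Fin 2) ℝ)
    (hm : m = !![(1 : ℝ), x; 0, 1] * !![Real.sqrt y, 0; 0, (Real.sqrt y)⁻¹] *
      !![w, 0; 0, w])
    (p : ℂ → ℂ) (hp : p = fun t => (a : ℂ) * t ^ 3 + (b : ℂ) * t ^ 2 + (c : ℂ) * t + (d : ℂ))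
    (ω : Fin 4 → ℂ) (hω : ω = ![-(a : ℂ), -(b : ℂ), -(c : ℂ), -(d : ℂ)]) :
    (∀ u v : ℂ, actGL2 m (fun u v => (u - Complex.I * v) ^ 3) u v
        = (w : ℂ) * ((y ^ (-(3 : ℝ) / 2) : ℝ) : ℂ) * (u - z * v) ^ 3) ∧
    (∀ q : Fin 4 → ℂ,
      (∀ u v : ℂ, cubicEval q u v = actGL2 m (fun u v => (-v + Complex.I * u) ^ 3) u v) →
      cubicPair ω q
        = -Complex.I * (w : ℂ) * ((y ^ (-(3 : ℝ) / 2) : ℝ) : ℂ) * p ((starRingEnd ℂ) z)) ∧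
    (∀ q : Fin 4 → ℂ,
      (∀ u v : ℂ, cubicEval q u v = actGL2 m (fun u v => (-v - Complex.I * u) ^ 3) u v) →
      cubicPair ω q = Complex.I * (w : ℂ) * ((y ^ (-(3 : ℝ) / 2) : ℝ) : ℂ) * p z) ∧
    (∀ q : Fin 4 → ℂ,
      (∀ u v : ℂ, cubicEval q u v
          = actGL2 m (fun u v => 3 * (-v - Complex.I * u) ^ 2 * (-v + Complex.I * u)) u v) →
      cubicPair ω q = -((w : ℂ) * ((y ^ (-(3 : ℝ) / 2) : ℝ) : ℂ) *
        (2 * (y : ℂ) * deriv p z + 3 * Complex.I * p z))) ∧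
    (∀ q : Fin 4 → ℂ,
      (∀ u v : ℂ, cubicEval q u v
          = actGL2 m (fun u v => 3 * (-v + Complex.I * u) ^ 2 * (-v - Complex.I * u)) u v) →
      cubicPair ω q = -((w : ℂ) * ((y ^ (-(3 : ℝ) / 2) : ℝ) : ℂ) *
        (2 * (y : ℂ) * deriv p ((starRingEnd ℂ) z) - 3 * Complex.I * p ((starRingEnd ℂ) z)))) := by
  set W : ℂ := (w : ℂ) * ((y ^ (-(3 : ℝ) / 2) : ℝ) : ℂ)
  have hact : ∀ k s t u v : ℂ, actGL2 m (fun u v => k * ((u - s * v) ^ 2 * (u - t * v))) u v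
      = k * W * ((u - (x + y * s) * v) ^ 2 * (u - (x + y * t) * v)) := by
    intro k s t u v
    rw [hm, actGL2_shear_diagonal_scalar_sq_mul hy hw]
    push_cast
    ring
  have hpair : ∀ (k s t : ℂ) (f : ℂ → ℂ → ℂ),
      f = (fun u v => k * ((u - s * v) ^ 2 * (u - t * v))) →
      ∀ q, (∀ u v, cubicEval q u v = actGL2 m f u v) →
      cubicPair ω q = k * W * (p (x + y * s) + y * (t - s) / 3 * deriv p (x + y * s)) := by
    rintro k s t f rfl q hq
    rw [hω, cubicPair_neg_coeffs_of_cubicEval_eq hp fun u v => (hq u v).trans (hact k s t u v)]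
    ring
  have hz' : z = x + y * I := by rw [hz]; ring
  have hzbar : (starRingEnd ℂ) z = x + y * -I := by
    rw [hz, map_add, map_mul, conj_I, conj_ofReal, conj_ofReal]
    ring
  refine ⟨fun u v => ?_, fun q hq => ?_, fun q hq => ?_, fun q hq => ?_, fun q hq => ?_⟩
  · rw [show (fun u v : ℂ => (u - I * v) ^ 3) = fun u v => 1 * ((u - I * v) ^ 2 * (u - I * v)) by
      funext u v; ring, hact, hz']
    ring
  · rw [hpair (-I) (-I) (-I) _ (by funext u v; grind [I_sq]) q hq, hzbar]; ring
  · rw [hpair I I I _ (by funext u v; grind [I_sq]) q hq, hz']; ring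
  · rw [hpair (-(3 * I)) I (-I) _ (by funext u v; grind [I_sq]) q hq, hz']; grind [I_sq]
  · rw [hpair (3 * I) (-I) I _ (by funext u v; grind [I_sq]) q hq, hzbar]; grind [I_sq]

end
end

section
/- Let F be a field of characteristic 0. For all g ∈ GL₂(F) and all binary cubic forms f, f' over F, one has ⟨w(f·g), w(f'·g)⟩ = det(g)·⟨w(f), w(f')⟩, where w(f) denotes the coefficient quadruple of f. -/
set_option autoImplicit false
set_option maxHeartbeats 1000000

/-!
The symplectic pairing of coefficient quadruples of binary cubic forms satisfies
`⟨w(f·g), w(f'·g)⟩ = det(g)·⟨w(f), w(f')⟩` for `g ∈ GL₂(F)`, where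
`(f·g)(x, y) = det(g)⁻¹·f((x, y)g)` and, for `f` with coefficients `(a, b, c, d)` and
`f'` with coefficients `(a', b', c', d')`,
`⟨w(f), w(f')⟩ = ad' − (1/3)bc' + (1/3)cb' − da'`.
-/

/-- For all `g ∈ GL₂(F)` (`F` a field of characteristic 0) and all binary cubic forms
`f = (a,b,c,d)`, `f' = (a',b',c',d')`, if `(A,B,C,D)` and `(A',B',C',D')` are the
coefficients of `f·g` and `f'·g`, then
`⟨w(f·g), w(f'·g)⟩ = det(g)·⟨w(f), w(f')⟩`. -/
theorem pairing_equivariance {F : Type*} [Field F] [CharZero F]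
    (g : Matrix (Fin 2) (Fin 2) F) (hg : IsUnit g.det)
    (a b c d a' b' c' d' A B C D A' B' C' D' : F)
    (hfg : ∀ x y : F,
      A * x ^ 3 + B * x ^ 2 * y + C * x * y ^ 2 + D * y ^ 3
        = g.det⁻¹ * (a * (x * g 0 0 + y * g 1 0) ^ 3
            + b * (x * g 0 0 + y * g 1 0) ^ 2 * (x * g 0 1 + y * g 1 1)
            + c * (x * g 0 0 + y * g 1 0) * (x * g 0 1 + y * g 1 1) ^ 2
            + d * (x * g 0 1 + y * g 1 1) ^ 3))
    (hf'g : ∀ x y : F,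
      A' * x ^ 3 + B' * x ^ 2 * y + C' * x * y ^ 2 + D' * y ^ 3
        = g.det⁻¹ * (a' * (x * g 0 0 + y * g 1 0) ^ 3
            + b' * (x * g 0 0 + y * g 1 0) ^ 2 * (x * g 0 1 + y * g 1 1)
            + c' * (x * g 0 0 + y * g 1 0) * (x * g 0 1 + y * g 1 1) ^ 2
            + d' * (x * g 0 1 + y * g 1 1) ^ 3)) :
    A * D' - (1 / 3) * B * C' + (1 / 3) * C * B' - D * A'
      = g.det * (a * d' - (1 / 3) * b * c' + (1 / 3) * c * b' - d * a') := by
  have he : g.det ≠ 0 := hg.ne_zero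
  rw [Matrix.det_fin_two] at hfg hf'g he ⊢
  set p := g 0 0; set q := g 0 1; set r := g 1 0; set s := g 1 1
  have hA : A = (p*s - q*r)⁻¹ * (a*p^3 + b*p^2*q + c*p*q^2 + d*q^3) := by
    linear_combination hfg 1 0
  have hD : D = (p*s - q*r)⁻¹ * (a*r^3 + b*r^2*s + c*r*s^2 + d*s^3) := by
    linear_combination hfg 0 1
  have hB : B = (p*s - q*r)⁻¹ * (3*a*p^2*r + b*(p^2*s + 2*p*q*r) + c*(q^2*r + 2*p*q*s) + 3*d*q^2*s) := by
    linear_combination (1/2 : F) * hfg 1 1 - (1/2 : F) * hfg 1 (-1) - hD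
  have hC : C = (p*s - q*r)⁻¹ * (3*a*p*r^2 + b*(q*r^2 + 2*p*r*s) + c*(p*s^2 + 2*q*r*s) + 3*d*q*s^2) := by
    linear_combination (1/2 : F) * hfg 1 1 + (1/2 : F) * hfg 1 (-1) - hA
  have hA' : A' = (p*s - q*r)⁻¹ * (a'*p^3 + b'*p^2*q + c'*p*q^2 + d'*q^3) := by
    linear_combination hf'g 1 0
  have hD' : D' = (p*s - q*r)⁻¹ * (a'*r^3 + b'*r^2*s + c'*r*s^2 + d'*s^3) := by
    linear_combination hf'g 0 1
  have hB' : B' = (p*s - q*r)⁻¹ * (3*a'*p^2*r + b'*(p^2*s + 2*p*q*r) + c'*(q^2*r + 2*p*q*s) + 3*d'*q^2*s) := by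
    linear_combination (1/2 : F) * hf'g 1 1 - (1/2 : F) * hf'g 1 (-1) - hD'
  have hC' : C' = (p*s - q*r)⁻¹ * (3*a'*p*r^2 + b'*(q*r^2 + 2*p*r*s) + c'*(p*s^2 + 2*q*r*s) + 3*d'*q*s^2) := by
    linear_combination (1/2 : F) * hf'g 1 1 + (1/2 : F) * hf'g 1 (-1) - hA'
  have hinv : (p*s - q*r)⁻¹ * (p*s - q*r) = 1 := inv_mul_cancel₀ he
  rw [hA, hB, hC, hD, hA', hB', hC', hD']
  linear_combination ((p*s - q*r) * (a * d' - (1 / 3) * b * c' + (1 / 3) * c * b' - d * a')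
    * ((p*s - q*r)⁻¹ * (p*s - q*r) + 1)) * hinv
end

section
/- Every cubic ring over ℤ has a good basis: if T is a commutative unital ring whose underlying additive group is free of rank 3 over ℤ, then there exist elements ω, θ ∈ T such that (1, ω, θ) is a ℤ-basis of T and ωθ ∈ ℤ·1. -/
set_option autoImplicit false

/-!
The element `1` of a cubic ring `T` is primitive in the lattice `T`: if `c • x = 1`
with `c ∈ ℤ`, taking norms gives `c ^ 3 * N(x) = 1`, so `c = ±1`. Hence `1` extends to a
basis `(1, ω₀, θ₀)`. Writing `ω₀ θ₀ = m + p ω₀ + q θ₀`, the shifted basis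
`(1, ω₀ - q, θ₀ - p)` satisfies `(ω₀ - q)(θ₀ - p) = m + p q`.
-/

namespace Module.Basis

theorem isUnit_of_smul_eq_one {R S ι : Type*} [CommRing R] [Ring S] [Algebra R S] [Fintype ι]
    [Nonempty ι] (b : Basis ι R S) {c : R} {x : S} (h : c • x = 1) : IsUnit c := by
  have hnorm := congrArg (Algebra.norm R) h
  rw [Algebra.smul_def, map_mul, Algebra.norm_algebraMap_of_basis b, map_one] at hnorm
  exact (isUnit_pow_iff Fintype.card_ne_zero).mp (IsUnit.of_mul_eq_one _ hnorm)

theorem exists_basis_apply_eq {R M ι : Type*} [CommRing R] [IsDomain R]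
    [IsPrincipalIdealRing R] [AddCommGroup M] [Module R M] [Fintype ι] (b : Basis ι R M)
    {v : M} (hv : ∀ (c : R) (x : M), c • x = v → IsUnit c) (i : ι) :
    ∃ b' : Basis ι R M, b' i = v := by
  classical
  have hv0 : v ≠ 0 := fun h ↦ not_isUnit_zero (hv 0 0 (by rw [zero_smul, h]))
  obtain ⟨n, snf⟩ := (R ∙ v).smithNormalForm b
  have hvN : v ∈ R ∙ v := Submodule.mem_span_singleton_self v
  have : Nontrivial (R ∙ v) :=
    ⟨⟨⟨v, hvN⟩, 0, fun h ↦ hv0 (congrArg Subtype.val h)⟩⟩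
  obtain rfl : n = 1 := by
    have hle : n ≤ 1 := by
      simpa [finrank_eq_card_basis snf.bN] using finrank_span_le_card (R := R) ({v} : Set M)
    have hpos : 0 < n := Fin.pos_iff_nonempty.mpr snf.bN.index_nonempty
    omega
  -- In a Smith basis adapted to the rank-one submodule `R ∙ v`, `v` is a multiple of one
  -- basis vector.
  obtain ⟨c, hc⟩ : ∃ c : R, (c * snf.a 0) • snf.bM (snf.f 0) = v := by
    refine ⟨snf.bN.repr ⟨v, hvN⟩ 0, ?_⟩
    have hsum := congrArg Subtype.val (snf.bN.sum_repr ⟨v, hvN⟩)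
    rw [Fin.sum_univ_one, SetLike.val_smul, snf.snf] at hsum
    rwa [mul_smul]
  set u := (hv _ _ hc).unit
  refine ⟨(snf.bM.unitsSMul (Function.update 1 (snf.f 0) u)).reindex
    (Equiv.swap (snf.f 0) i), ?_⟩
  rw [reindex_apply, Equiv.symm_swap, Equiv.swap_apply_right, unitsSMul_apply,
    Function.update_self, Units.smul_def, IsUnit.unit_spec, hc]

end Module.Basis

open Module

theorem exists_basis_mul_eq_algebraMap {R S : Type*} [CommRing R] [CommRing S] [Algebra R S]
    (d : Basis (Fin 3) R S) (hd : d 0 = 1) :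
    ∃ (d' : Basis (Fin 3) R S) (n : R), d' 0 = 1 ∧ d' 1 * d' 2 = algebraMap R S n := by
  set m := d.coord 0 (d 1 * d 2)
  set p := d.coord 1 (d 1 * d 2)
  set q := d.coord 2 (d 1 * d 2)
  have hprod : d 1 * d 2 = m • 1 + p • d 1 + q • d 2 := by
    conv_lhs => rw [← d.sum_repr (d 1 * d 2)]
    rw [Fin.sum_univ_three, hd]
    rfl
  set f : Dual R S := -(q • d.coord 1 + p • d.coord 2)
  have hf : f (d 0) = 0 := by simp [f]
  set d' := d.map (LinearEquiv.transvection hf)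
  have hshift (j : Fin 3) : d' j = d j + f (d j) • 1 := by
    rw [Basis.map_apply, LinearEquiv.transvection.apply, hd]
  have hω : d' 1 = d 1 - q • 1 := by simp [hshift, f, sub_eq_add_neg]
  have hθ : d' 2 = d 2 - p • 1 := by simp [hshift, f, sub_eq_add_neg]
  refine ⟨d', m + p * q, by rw [hshift, hf, zero_smul, add_zero, hd], ?_⟩
  simp only [hω, hθ, Algebra.smul_def, mul_one, map_add, map_mul] at hprod ⊢
  linear_combination hprod

theorem cubic_ring_has_good_basis (T : Type*) [CommRing T] (b : Module.Basis (Fin 3) ℤ T) :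
    ∃ (b' : Module.Basis (Fin 3) ℤ T) (n : ℤ), b' 0 = 1 ∧ b' 1 * b' 2 = (n : T) := by
  obtain ⟨d, hd⟩ := b.exists_basis_apply_eq (fun _ _ h ↦ b.isUnit_of_smul_eq_one h) 0
  obtain ⟨b', n, h0, h12⟩ := exists_basis_mul_eq_algebraMap d hd
  exact ⟨b', n, h0, by rwa [eq_intCast] at h12⟩
end

section
/- The assignment f ↦ T_f induces a bijection between the orbits of GL₂(ℤ) acting on integral binary cubic forms by (f·g)(x, y) = det(g)⁻¹·f((x, y)g) and isomorphism classes of cubic rings over ℤ. That is: (i) every cubic ring over ℤ is isomorphic as a ring to T_f for some binary cubic form f with integer coefficients; and (ii) for two such forms f, f', the rings T_f and T_{f'} are isomorphic if and only if f' = f·g for some g ∈ GL₂(ℤ). -/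
set_option autoImplicit false

/-!
Choose coordinates `E : T ≃+ ℤ³` with `E 1 = (1, 0, 0)`: a Smith normal form of `ℤ 1 ⊆ T`
writes `1 = n • b` with `b` a basis vector, and `n • b = 1` makes `n` divide every coordinate of
every element, so `n = ±1`. Translating the other two basis vectors `ω, θ` by integers makes
`ωθ ∈ ℤ`, and then associativity of `ω²θ` and `θ²ω` forces the multiplication table to be that
of `T_f`, with `a, b, c, d` read off from `ω²` and `θ²`.

Conversely, `f` is the index form of `T_f`: `1 ∧ ξ ∧ ξ² = f(ξ) · (1 ∧ ω ∧ θ)`. Hence a ring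
isomorphism `T_f ≅ T_{f'}` inducing the matrix `M` on `T / ℤ ≅ ℤ²` satisfies
`f'(vM) = det M · f(v)`, i.e. `f' = f·M⁻¹`. For the converse, given `g`, normalize coordinates of
`T_f` inducing `g⁻¹` on `T / ℤ`; they present `T_f` as `T_{f''}`, and the same identity shows
`f'' = f·g`.
-/

/-- The multiplication of the cubic ring `T_f` attached to the binary cubic form
`f = (a, b, c, d)`: elements written `(x₀, x₁, x₂)` for `x₀ + x₁ω + x₂θ`, with
`ωθ = θω = −ad`, `ω² = −ac + aθ − bω`, `θ² = −bd + cθ − dω`. -/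
def cubicMul (a b c d : ℤ) (x y : ℤ × ℤ × ℤ) : ℤ × ℤ × ℤ :=
  (x.1 * y.1 - a * c * (x.2.1 * y.2.1) - a * d * (x.2.1 * y.2.2 + x.2.2 * y.2.1)
      - b * d * (x.2.2 * y.2.2),
   x.1 * y.2.1 + x.2.1 * y.1 - b * (x.2.1 * y.2.1) - d * (x.2.2 * y.2.2),
   x.1 * y.2.2 + x.2.2 * y.1 + a * (x.2.1 * y.2.1) + c * (x.2.2 * y.2.2))

open Matrix

def cubicForm (a b c d : ℤ) (v : Fin 2 → ℤ) : ℤ :=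
  a * v 0 ^ 3 + b * v 0 ^ 2 * v 1 + c * v 0 * v 1 ^ 2 + d * v 1 ^ 3

theorem coeffs_eq_of_cubicForm_eq {a b c d a' b' c' d' : ℤ}
    (h : ∀ x y : ℤ, cubicForm a b c d ![x, y] = cubicForm a' b' c' d' ![x, y]) :
    a = a' ∧ b = b' ∧ c = c' ∧ d = d' := by
  have h₁ := h 1 0
  have h₂ := h 0 1
  have h₃ := h 1 1
  have h₄ := h 1 (-1)
  simp only [cubicForm, cons_val_zero, cons_val_one] at h₁ h₂ h₃ h₄
  refine ⟨?_, ?_, ?_, ?_⟩ <;> linarith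

def tailVec (v : ℤ × ℤ × ℤ) : Fin 2 → ℤ := ![v.2.1, v.2.2]

theorem tailVec_mk (t : ℤ) (w : Fin 2 → ℤ) : tailVec (t, w 0, w 1) = w := by
  ext i; fin_cases i <;> rfl

section QuotMatrix

variable {F : Type*} [FunLike F (ℤ × ℤ × ℤ) (ℤ × ℤ × ℤ)]

-- The matrix, acting on row vectors, of the map induced by `e` on `ℤ³ / ℤ (1, 0, 0) ≅ ℤ²`.
def quotMatrix (e : F) : Matrix (Fin 2) (Fin 2) ℤ :=
  of ![tailVec (e (0, 1, 0)), tailVec (e (0, 0, 1))]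

theorem quotMatrix_congr {e e' : F} (h : ∀ v, (e v).2 = (e' v).2) :
    quotMatrix e = quotMatrix e' := by
  simp only [quotMatrix, tailVec, h]

variable [AddMonoidHomClass F (ℤ × ℤ × ℤ) (ℤ × ℤ × ℤ)]

theorem tailVec_map (e : F) (he : e (1, 0, 0) = (1, 0, 0)) (v : ℤ × ℤ × ℤ) :
    tailVec (e v) = tailVec v ᵥ* quotMatrix e := by
  have hv : v = v.1 • (1, 0, 0) + v.2.1 • (0, 1, 0) + v.2.2 • (0, 0, 1) := by ext <;> simp
  rw [hv, map_add, map_add, map_zsmul, map_zsmul, map_zsmul, he]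
  ext i; fin_cases i <;> simp [tailVec, quotMatrix, vecMul, dotProduct, Fin.sum_univ_two]

theorem det_of_vecMul {R : Type*} [CommRing R] (u w : Fin 2 → R) (M : Matrix (Fin 2) (Fin 2) R) :
    (of ![u ᵥ* M, w ᵥ* M]).det = (of ![u, w]).det * M.det := by
  rw [← det_mul]
  congr 1
  ext i j
  fin_cases i <;> rfl

-- `f` is the index form of `T_f`: `1 ∧ ξ ∧ ξ² = f(ξ) · (1 ∧ ω ∧ θ)`.
theorem det_tailVec_cubicMul_self (a b c d : ℤ) (ξ : ℤ × ℤ × ℤ) :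
    (of ![tailVec ξ, tailVec (cubicMul a b c d ξ ξ)]).det = cubicForm a b c d (tailVec ξ) := by
  rw [tailVec, tailVec, det_fin_two_of, cubicForm]
  simp only [cubicMul, cons_val_zero, cons_val_one]
  ring

theorem cubicForm_vecMul_quotMatrix {a b c d a' b' c' d' : ℤ} (e : F)
    (he₁ : e (1, 0, 0) = (1, 0, 0))
    (he : ∀ x y, e (cubicMul a b c d x y) = cubicMul a' b' c' d' (e x) (e y))
    (v : Fin 2 → ℤ) :
    cubicForm a' b' c' d' (v ᵥ* quotMatrix e) = (quotMatrix e).det * cubicForm a b c d v := by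
  set ξ : ℤ × ℤ × ℤ := (0, v 0, v 1)
  have hξ : tailVec ξ = v := tailVec_mk 0 v
  calc cubicForm a' b' c' d' (v ᵥ* quotMatrix e)
      = (of ![tailVec (e ξ), tailVec (cubicMul a' b' c' d' (e ξ) (e ξ))]).det := by
        rw [det_tailVec_cubicMul_self, tailVec_map e he₁, hξ]
    _ = (of ![tailVec ξ, tailVec (cubicMul a b c d ξ ξ)]).det * (quotMatrix e).det := by
        rw [← he, tailVec_map e he₁, tailVec_map e he₁, det_of_vecMul]
    _ = (quotMatrix e).det * cubicForm a b c d v := by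
        rw [det_tailVec_cubicMul_self, hξ, mul_comm]

end QuotMatrix

theorem isUnit_det_quotMatrix (e : ℤ × ℤ × ℤ ≃+ ℤ × ℤ × ℤ) (he : e (1, 0, 0) = (1, 0, 0)) :
    IsUnit (quotMatrix e).det := by
  have he' : e.symm (1, 0, 0) = (1, 0, 0) := by rw [AddEquiv.symm_apply_eq, he]
  have hinv : quotMatrix e * quotMatrix e.symm = 1 := by
    refine ext_iff_vecMul.2 fun w => ?_
    rw [← vecMul_vecMul, vecMul_one, ← tailVec_mk 0 w, ← tailVec_map _ he, ← tailVec_map _ he',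
      AddEquiv.symm_apply_apply]
  exact .of_mul_eq_one _ (by rw [← det_mul, hinv, det_one])

theorem exists_cubicForm_eq_of_addEquiv {a b c d a' b' c' d' : ℤ}
    (e : ℤ × ℤ × ℤ ≃+ ℤ × ℤ × ℤ) (he₁ : e (1, 0, 0) = (1, 0, 0))
    (he : ∀ x y, e (cubicMul a b c d x y) = cubicMul a' b' c' d' (e x) (e y)) :
    ∃ (g : Matrix (Fin 2) (Fin 2) ℤ) (ε : ℤ), g.det * ε = 1 ∧
      ∀ x y : ℤ, cubicForm a' b' c' d' ![x, y] = ε * cubicForm a b c d (![x, y] ᵥ* g) := by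
  have hM := isUnit_det_quotMatrix e he₁
  refine ⟨(quotMatrix e)⁻¹, (quotMatrix e).det, det_nonsing_inv_mul_det _ hM, fun x y => ?_⟩
  rw [← cubicForm_vecMul_quotMatrix e he₁ he, vecMul_vecMul, nonsing_inv_mul _ hM, vecMul_one]

def CubicRing (_a _b _c _d : ℤ) : Type := ℤ × ℤ × ℤ

namespace CubicRing

variable (a b c d : ℤ)

instance : AddCommGroup (CubicRing a b c d) := inferInstanceAs (AddCommGroup (ℤ × ℤ × ℤ))

instance : CommRing (CubicRing a b c d) where
  mul := cubicMul a b c d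
  one := ((1, 0, 0) : ℤ × ℤ × ℤ)
  mul_assoc x y z := by
    show cubicMul a b c d (cubicMul a b c d x y) z = cubicMul a b c d x (cubicMul a b c d y z)
    ext <;> simp only [cubicMul] <;> ring
  one_mul x := by
    show cubicMul a b c d (1, 0, 0) x = x
    ext <;> simp [cubicMul]
  mul_one x := by
    show cubicMul a b c d x (1, 0, 0) = x
    ext <;> simp [cubicMul]
  zero_mul x := by
    show cubicMul a b c d 0 x = 0
    ext <;> simp [cubicMul]
  mul_zero x := by
    show cubicMul a b c d x 0 = 0
    ext <;> simp [cubicMul]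
  left_distrib (x y z : ℤ × ℤ × ℤ) := by
    show cubicMul a b c d x (y + z) = cubicMul a b c d x y + cubicMul a b c d x z
    ext <;> simp only [cubicMul, Prod.fst_add, Prod.snd_add] <;> ring
  right_distrib (x y z : ℤ × ℤ × ℤ) := by
    show cubicMul a b c d (x + y) z = cubicMul a b c d x z + cubicMul a b c d y z
    ext <;> simp only [cubicMul, Prod.fst_add, Prod.snd_add] <;> ring
  mul_comm x y := by
    show cubicMul a b c d x y = cubicMul a b c d y x
    ext <;> simp only [cubicMul] <;> ring

def equiv : CubicRing a b c d ≃+ ℤ × ℤ × ℤ := AddEquiv.refl _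

end CubicRing

section Coordinates

variable {T : Type*} [CommRing T]

section

variable (E : T ≃+ ℤ × ℤ × ℤ) (hE : E 1 = (1, 0, 0))
include hE

theorem symm_eq_of_map_one (v : ℤ × ℤ × ℤ) :
    E.symm v = v.1 • 1 + v.2.1 • E.symm (0, 1, 0) + v.2.2 • E.symm (0, 0, 1) := by
  have hv : v = v.1 • (1, 0, 0) + v.2.1 • (0, 1, 0) + v.2.2 • (0, 0, 1) := by ext <;> simp
  conv_lhs => rw [hv, map_add, map_add, map_zsmul, map_zsmul, map_zsmul, ← hE,
    AddEquiv.symm_apply_apply]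

theorem map_symm_mul_symm_of_map_one (u v : ℤ × ℤ × ℤ) :
    E (E.symm u * E.symm v) =
      (u.1 * v.1, u.1 * v.2.1 + u.2.1 * v.1, u.1 * v.2.2 + u.2.2 * v.1)
        + (u.2.1 * v.2.1) • E (E.symm (0, 1, 0) * E.symm (0, 1, 0))
        + (u.2.1 * v.2.2 + u.2.2 * v.2.1) • E (E.symm (0, 1, 0) * E.symm (0, 0, 1))
        + (u.2.2 * v.2.2) • E (E.symm (0, 0, 1) * E.symm (0, 0, 1)) := by
  set ω := E.symm (0, 1, 0)
  set θ := E.symm (0, 0, 1)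
  have hmul : E.symm u * E.symm v =
      (u.1 * v.1) • 1 + (u.1 * v.2.1 + u.2.1 * v.1) • ω + (u.1 * v.2.2 + u.2.2 * v.1) • θ
        + (u.2.1 * v.2.1) • (ω * ω) + (u.2.1 * v.2.2 + u.2.2 * v.2.1) • (ω * θ)
        + (u.2.2 * v.2.2) • (θ * θ) := by
    rw [symm_eq_of_map_one E hE u, symm_eq_of_map_one E hE v]
    simp only [zsmul_eq_mul]
    push_cast
    ring
  rw [hmul]
  simp only [map_add, map_zsmul, hE, ω, θ, AddEquiv.apply_symm_apply]
  ext <;> simp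

end

-- `E` is the coordinate map of a basis `1, ω, θ` of `T` with `ωθ ∈ ℤ`.
def IsNormalBasis (E : T ≃+ ℤ × ℤ × ℤ) : Prop :=
  E 1 = (1, 0, 0) ∧ (E (E.symm (0, 1, 0) * E.symm (0, 0, 1))).2 = 0

theorem IsNormalBasis.exists_map_mul_eq_cubicMul {E : T ≃+ ℤ × ℤ × ℤ} (hE : IsNormalBasis E) :
    ∃ a b c d : ℤ, ∀ x y : T, E (x * y) = cubicMul a b c d (E x) (E y) := by
  have hmul := map_symm_mul_symm_of_map_one E hE.1
  set ω := E.symm (0, 1, 0)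
  set θ := E.symm (0, 0, 1)
  obtain ⟨p₀, p₁, p₂, hP⟩ : ∃ p₀ p₁ p₂, E (ω * ω) = (p₀, p₁, p₂) := ⟨_, _, _, rfl⟩
  obtain ⟨l, hQ⟩ : ∃ l, E (ω * θ) = (l, 0, 0) := ⟨_, Prod.ext rfl hE.2⟩
  obtain ⟨r₀, r₁, r₂, hR⟩ : ∃ r₀ r₁ r₂, E (θ * θ) = (r₀, r₁, r₂) := ⟨_, _, _, rfl⟩
  simp only [hP, hQ, hR] at hmul
  -- associativity of `ω² θ` and of `θ² ω` pins down the constant terms of the table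
  have h₁ := congrArg E (mul_assoc ω ω θ)
  have h₂ := congrArg E (mul_assoc θ θ ω)
  rw [← E.symm_apply_apply (ω * ω), hP, ← E.symm_apply_apply (ω * θ), hQ, hmul, hmul] at h₁
  rw [← E.symm_apply_apply (θ * θ), hR, mul_comm θ ω, ← E.symm_apply_apply (ω * θ), hQ, hmul,
    hmul] at h₂
  simp only [Prod.smul_mk, Prod.mk_add_mk, Prod.ext_iff, smul_eq_mul, mul_zero, mul_one, zero_mul,
    one_mul, add_zero, zero_add] at h₁ h₂
  obtain ⟨-, hl, hp₀⟩ := h₁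
  obtain ⟨-, hr₀, -⟩ := h₂
  refine ⟨p₂, -p₁, r₂, -r₁, fun x y => ?_⟩
  have hxy := hmul (E x) (E y)
  rw [E.symm_apply_apply, E.symm_apply_apply] at hxy
  rw [hxy]
  obtain ⟨x₀, x₁, x₂⟩ := E x
  obtain ⟨y₀, y₁, y₂⟩ := E y
  ext <;> simp only [cubicMul, Prod.fst_add, Prod.snd_add, Prod.smul_mk, smul_eq_mul]
  · linear_combination x₁ * y₁ * hp₀ - (x₁ * y₂ + x₂ * y₁) * hl + x₂ * y₂ * hr₀
  all_goals ring

def shearAddEquiv (s t : ℤ) : ℤ × ℤ × ℤ ≃+ ℤ × ℤ × ℤ where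
  toFun v := (v.1 + s * v.2.1 + t * v.2.2, v.2)
  invFun v := (v.1 - s * v.2.1 - t * v.2.2, v.2)
  left_inv v := Prod.ext (by dsimp only; ring) rfl
  right_inv v := Prod.ext (by dsimp only; ring) rfl
  map_add' u v := Prod.ext (by dsimp only [Prod.fst_add, Prod.snd_add]; ring) rfl

-- If `ωθ = l + mω + nθ`, then `(ω - n)(θ - m) = l + mn`.
theorem exists_isNormalBasis (E : T ≃+ ℤ × ℤ × ℤ) (hE : E 1 = (1, 0, 0)) :
    ∃ E' : T ≃+ ℤ × ℤ × ℤ, IsNormalBasis E' ∧ ∀ x, (E' x).2 = (E x).2 := by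
  obtain ⟨l, m, n, hQ⟩ : ∃ l m n, E (E.symm (0, 1, 0) * E.symm (0, 0, 1)) = (l, m, n) :=
    ⟨_, _, _, rfl⟩
  refine ⟨E.trans (shearAddEquiv n m), ⟨?_, ?_⟩, fun x => rfl⟩
  · simp [shearAddEquiv, hE]
  · change (E (E.symm (0 - n * 1 - m * 0, 1, 0) * E.symm (0 - n * 0 - m * 1, 0, 1))).2 = 0
    rw [map_symm_mul_symm_of_map_one E hE, hQ]
    simp

end Coordinates

theorem Module.Basis.isUnit_of_smul_eq_one_s15 {R T ι : Type*} [CommRing R] [Ring T] [Algebra R T]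
    [Nonempty ι] (B : Basis ι R T) {n : R} {y : T} (h : n • y = 1) : IsUnit n := by
  obtain ⟨i⟩ := ‹Nonempty ι›
  refine .of_mul_eq_one (B.coord i (y * B i)) ?_
  rw [← smul_eq_mul, ← map_smul, ← smul_mul_assoc, h, one_mul, Basis.coord_apply, Basis.repr_self,
    Finsupp.single_eq_same]

open Module Submodule in
theorem Module.Basis.exists_apply_eq_one {R T ι : Type*} [CommRing R] [IsDomain R]
    [IsPrincipalIdealRing R] [Ring T] [Algebra R T] [Finite ι] (B : Basis ι R T) (i₀ : ι) :
    ∃ B' : Basis ι R T, B' i₀ = 1 := by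
  classical
  have : Nontrivial T := ⟨⟨B i₀, 0, B.ne_zero i₀⟩⟩
  have : Nonempty ι := ⟨i₀⟩
  have : Module.Free R T := .of_basis B
  obtain ⟨n, S⟩ := (R ∙ (1 : T)).smithNormalForm B
  obtain rfl : n = 1 := by
    have hli : LinearIndependent R ![(1 : T)] := linearIndependent_unique_iff.2 (by simp)
    have h := finrank_span_eq_card hli
    rw [Matrix.range_cons, Matrix.range_empty, Set.union_empty, finrank_eq_card_basis S.bN] at h
    simpa using h
  obtain ⟨u, hu⟩ : ∃ u : R, u • S.bM (S.f 0) = 1 := by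
    have h := congrArg Subtype.val (S.bN.sum_repr ⟨1, mem_span_singleton_self 1⟩)
    rw [Fin.sum_univ_one, Submodule.coe_smul, S.snf, smul_smul] at h
    exact ⟨_, h⟩
  have hw : ∀ i, IsUnit (Function.update (fun _ => (1 : R)) (S.f 0) u i) := by
    intro i
    rcases eq_or_ne i (S.f 0) with rfl | hi
    · simpa using S.bM.isUnit_of_smul_eq_one_s15 hu
    · simp [hi]
  refine ⟨(S.bM.isUnitSMul hw).reindex (Equiv.swap (S.f 0) i₀), ?_⟩
  simp [Basis.isUnitSMul_apply, hu]

@[simps]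
def finThreeArrowAddEquiv : (Fin 3 → ℤ) ≃+ ℤ × ℤ × ℤ where
  toFun v := (v 0, v 1, v 2)
  invFun p := ![p.1, p.2.1, p.2.2]
  left_inv v := by ext i; fin_cases i <;> rfl
  right_inv _ := rfl
  map_add' _ _ := rfl

theorem exists_addEquiv_map_one {T : Type*} [CommRing T] (B : Module.Basis (Fin 3) ℤ T) :
    ∃ E : T ≃+ ℤ × ℤ × ℤ, E 1 = (1, 0, 0) := by
  obtain ⟨B', hB'⟩ := B.exists_apply_eq_one 0
  refine ⟨B'.equivFun.toAddEquiv.trans finThreeArrowAddEquiv, ?_⟩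
  simp [← hB']

theorem exists_addEquiv_map_mul_eq_cubicMul {T : Type*} [CommRing T]
    (B : Module.Basis (Fin 3) ℤ T) :
    ∃ (a b c d : ℤ) (E : T ≃+ ℤ × ℤ × ℤ),
      E 1 = (1, 0, 0) ∧ ∀ x y : T, E (x * y) = cubicMul a b c d (E x) (E y) := by
  obtain ⟨E₀, hE₀⟩ := exists_addEquiv_map_one B
  obtain ⟨E, hE, -⟩ := exists_isNormalBasis E₀ hE₀
  obtain ⟨a, b, c, d, hmul⟩ := hE.exists_map_mul_eq_cubicMul
  exact ⟨a, b, c, d, E, hE.1, hmul⟩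

theorem exists_quotMatrix_eq (N : Matrix (Fin 2) (Fin 2) ℤ) (hN : IsUnit N.det) :
    ∃ e : ℤ × ℤ × ℤ ≃+ ℤ × ℤ × ℤ, e (1, 0, 0) = (1, 0, 0) ∧ quotMatrix e = N := by
  let e : ℤ × ℤ × ℤ ≃+ ℤ × ℤ × ℤ :=
    { toFun v := (v.1, (tailVec v ᵥ* N) 0, (tailVec v ᵥ* N) 1)
      invFun v := (v.1, (tailVec v ᵥ* N⁻¹) 0, (tailVec v ᵥ* N⁻¹) 1)
      left_inv v := by simp only [tailVec_mk, vecMul_vecMul, mul_nonsing_inv _ hN, vecMul_one]; rfl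
      right_inv v := by simp only [tailVec_mk, vecMul_vecMul, nonsing_inv_mul _ hN, vecMul_one]; rfl
      map_add' u v := by
        simp only [Prod.mk_add_mk]
        rw [show tailVec (u + v) = tailVec u + tailVec v by ext i; fin_cases i <;> rfl, add_vecMul]
        rfl }
  refine ⟨e, by simp [e, tailVec, vecMul, dotProduct], ?_⟩
  ext i j
  fin_cases i <;> fin_cases j <;> simp [e, quotMatrix, tailVec, vecMul, dotProduct]

theorem exists_addEquiv_of_cubicForm_eq {a b c d a' b' c' d' : ℤ}
    (g : Matrix (Fin 2) (Fin 2) ℤ) (ε : ℤ) (hdet : g.det * ε = 1)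
    (hf : ∀ x y : ℤ, cubicForm a' b' c' d' ![x, y] = ε * cubicForm a b c d (![x, y] ᵥ* g)) :
    ∃ e : ℤ × ℤ × ℤ ≃+ ℤ × ℤ × ℤ, e (1, 0, 0) = (1, 0, 0) ∧
      ∀ x y, e (cubicMul a b c d x y) = cubicMul a' b' c' d' (e x) (e y) := by
  have hg : IsUnit g.det := .of_mul_eq_one ε hdet
  obtain ⟨E₀, hE₀, hM₀⟩ := exists_quotMatrix_eq g⁻¹ (isUnit_nonsing_inv_det _ hg)
  obtain ⟨E, hE, hEtail⟩ := exists_isNormalBasis ((CubicRing.equiv a b c d).trans E₀) hE₀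
  obtain ⟨a'', b'', c'', d'', hmul⟩ := hE.exists_map_mul_eq_cubicMul
  set e := (CubicRing.equiv a b c d).symm.trans E
  have he₁ : e (1, 0, 0) = (1, 0, 0) := hE.1
  have he : ∀ x y, e (cubicMul a b c d x y) = cubicMul a'' b'' c'' d'' (e x) (e y) := hmul
  have hM : quotMatrix e = g⁻¹ := hM₀ ▸ quotMatrix_congr fun v => hEtail _
  have hdet' : g⁻¹.det = ε := by
    calc g⁻¹.det = g⁻¹.det * (g.det * ε) := by rw [hdet, mul_one]
    _ = ε := by rw [← mul_assoc, det_nonsing_inv_mul_det _ hg, one_mul]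
  obtain ⟨rfl, rfl, rfl, rfl⟩ : a'' = a' ∧ b'' = b' ∧ c'' = c' ∧ d'' = d' := by
    refine coeffs_eq_of_cubicForm_eq fun x y => ?_
    have h := cubicForm_vecMul_quotMatrix e he₁ he (![x, y] ᵥ* g)
    rw [hM, vecMul_vecMul, mul_nonsing_inv _ hg, vecMul_one, hdet'] at h
    rw [h, hf]
  exact ⟨e, he₁, he⟩

theorem exists_addEquiv_cubicMul_iff (a b c d a' b' c' d' : ℤ) :
    (∃ e : ℤ × ℤ × ℤ ≃+ ℤ × ℤ × ℤ, e (1, 0, 0) = (1, 0, 0) ∧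
        ∀ x y, e (cubicMul a b c d x y) = cubicMul a' b' c' d' (e x) (e y)) ↔
      ∃ (g : Matrix (Fin 2) (Fin 2) ℤ) (ε : ℤ), g.det * ε = 1 ∧
        ∀ x y : ℤ, cubicForm a' b' c' d' ![x, y] = ε * cubicForm a b c d (![x, y] ᵥ* g) :=
  ⟨fun ⟨e, he₁, he⟩ => exists_cubicForm_eq_of_addEquiv e he₁ he,
    fun ⟨g, ε, hdet, hf⟩ => exists_addEquiv_of_cubicForm_eq g ε hdet hf⟩

/-- (i) Every cubic ring over `ℤ` is isomorphic as a ring to `T_f` for some integral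
binary cubic form `f`; (ii) `T_f ≅ T_{f'}` if and only if `f' = f·g` for some
`g ∈ GL₂(ℤ)`, i.e. `f'(x, y) = det(g)⁻¹·f((x, y)g)`. -/
theorem cubic_rings_parametrized_by_binary_cubic_forms :
    (∀ (T : Type) [CommRing T], Nonempty (Module.Basis (Fin 3) ℤ T) →
      ∃ (a b c d : ℤ) (e : T ≃+ (ℤ × ℤ × ℤ)),
        e 1 = (1, 0, 0) ∧ ∀ x y : T, e (x * y) = cubicMul a b c d (e x) (e y)) ∧
    (∀ a b c d a' b' c' d' : ℤ,
      (∃ e : (ℤ × ℤ × ℤ) ≃+ (ℤ × ℤ × ℤ), e (1, 0, 0) = (1, 0, 0) ∧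
          ∀ x y : ℤ × ℤ × ℤ,
            e (cubicMul a b c d x y) = cubicMul a' b' c' d' (e x) (e y)) ↔
      (∃ (g : Matrix (Fin 2) (Fin 2) ℤ) (ε : ℤ), g.det * ε = 1 ∧
          ∀ x y : ℤ,
            a' * x ^ 3 + b' * x ^ 2 * y + c' * x * y ^ 2 + d' * y ^ 3
              = ε * (a * (x * g 0 0 + y * g 1 0) ^ 3
                  + b * (x * g 0 0 + y * g 1 0) ^ 2 * (x * g 0 1 + y * g 1 1)
                  + c * (x * g 0 0 + y * g 1 0) * (x * g 0 1 + y * g 1 1) ^ 2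
                  + d * (x * g 0 1 + y * g 1 1) ^ 3))) := by
  refine ⟨fun T _ ⟨B⟩ => exists_addEquiv_map_mul_eq_cubicMul B, fun a b c d a' b' c' d' => ?_⟩
  simpa [cubicForm, vecMul, dotProduct, Fin.sum_univ_two] using
    exists_addEquiv_cubicMul_iff a b c d a' b' c' d'
end

section
/- Let p be a prime, let k ≥ 2 be an integer, and let g(x) ∈ ℤ[x] be a polynomial of degree at most 3 such that the reduction ḡ of g modulo p is nonzero and there is no γ₀ ∈ 𝔽_p with ḡ(γ₀) = 0 and ḡ'(γ₀) = 0. Then ∑_{δ ∈ (ℤ/p^kℤ)^×} ∑_{γ ∈ ℤ/p^kℤ} e^{2πi·δ·g(γ)/p^k} = 0. -/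
set_option autoImplicit false

/-!
Write `G` for `g` over `ℤ/p^kℤ`, `ψ` for the standard additive character and
`c = p^(k-1)`. Since `c² = 0`, Taylor expansion makes `γ ↦ δ G(γ)` affine along each coset
`γ + cℤ/p^kℤ`, so averaging over these cosets kills every `γ` with `c G'(γ) ≠ 0`, i.e. with
`ḡ'(γ) ≠ 0`. At the remaining `γ` the separability of `ḡ` makes `G(γ)` a unit, and the sum
of `ψ(δ G(γ))` over units `δ` vanishes by the same averaging, because `δ + ct` is a unit
exactly when `δ` is.
-/

open Finset Polynomial

theorem IsNilpotent.isUnit_add_iff {S : Type*} [CommRing S] {r : S} (hr : IsNilpotent r) {x : S} :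
    IsUnit (x + r) ↔ IsUnit x :=
  ⟨fun h => by simpa using hr.neg.isUnit_add_left_of_commute h (.all _ _),
    fun h => hr.isUnit_add_left_of_commute h (.all _ _)⟩

namespace AddChar

variable {R R' : Type*} [CommRing R] [Fintype R] [DecidableEq R] [Field R'] [CharZero R']
  {ψ : AddChar R R'}

theorem sum_eq_sum_filter_of_map_add_mul (hψ : ψ.IsPrimitive) (f : R → R') (c : R) (L : R → R)
    (hf : ∀ x t, f (x + c * t) = f x * ψ (L x * t)) :
    ∑ x, f x = ∑ x with L x = 0, f x := by
  have hcard : (Fintype.card R : R') ≠ 0 := Nat.cast_ne_zero.mpr Fintype.card_ne_zero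
  apply mul_left_cancel₀ hcard
  calc (Fintype.card R : R') * ∑ x, f x = ∑ t : R, ∑ x, f (x + c * t) := by
        rw [← nsmul_eq_mul, ← card_univ, ← sum_const]
        exact sum_congr rfl fun t _ =>
          (Fintype.sum_equiv (Equiv.addRight (c * t)) _ _ fun _ => rfl).symm
    _ = ∑ x, f x * ∑ t, ψ (t * L x) := by
        rw [sum_comm]
        simp_rw [hf, mul_sum, mul_comm (L _)]
    _ = (Fintype.card R : R') * ∑ x with L x = 0, f x := by
        simp_rw [sum_mulShift _ hψ, mul_sum, sum_filter]
        exact sum_congr rfl fun x _ => by split_ifs <;> simp [mul_comm]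

theorem sum_units_mul_eq_zero (hψ : ψ.IsPrimitive) {c : R} (hc : IsNilpotent c) (hc0 : c ≠ 0)
    {a : R} (ha : IsUnit a) : ∑ u : Rˣ, ψ (u * a) = 0 := by
  have hunits : ∑ u : Rˣ, ψ (u * a) = ∑ x, if IsUnit x then ψ (x * a) else 0 := by
    rw [← sum_filter]
    exact sum_bij' (fun u _ => u) (fun x hx => (mem_filter.1 hx).2.unit)
      (by simp) (by simp) (by simp) (by simp) (by simp)
  have hca : c * a ≠ 0 := fun h => hc0 (ha.mul_left_eq_zero.mp h)
  rw [hunits, sum_eq_sum_filter_of_map_add_mul hψ _ c (fun _ => c * a), filter_false_of_mem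
    (fun _ _ => hca), sum_empty]
  intro x t
  simp only [((Commute.all c t).isNilpotent_mul_right hc).isUnit_add_iff]
  split_ifs
  · rw [← map_add_eq_mul]
    congr 1
    ring
  · rw [zero_mul]

theorem sum_units_mul_eval_eq_sum_filter (hψ : ψ.IsPrimitive) (G : R[X]) {c : R} (hc : c ^ 2 = 0)
    (u : Rˣ) :
    ∑ x, ψ (u * G.eval x) = ∑ x with c * G.derivative.eval x = 0, ψ (u * G.eval x) := by
  rw [sum_eq_sum_filter_of_map_add_mul hψ _ c (fun x => u * (c * G.derivative.eval x))]
  · simp only [Units.mul_right_eq_zero]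
  · intro x t
    rw [eval_add_of_sq_eq_zero _ _ _ (by rw [mul_pow, hc, zero_mul]), ← map_add_eq_mul]
    congr 1
    ring

end AddChar

theorem Polynomial.hom_eval_map_intCastRingHom {R S : Type*} [Ring R] [Ring S] (f : R →+* S)
    (g : ℤ[X]) (x : R) :
    f ((g.map (Int.castRingHom R)).eval x) = (g.map (Int.castRingHom S)).eval (f x) := by
  rw [← eval₂_at_apply, ← eval_map, map_map, Subsingleton.elim (f.comp _) (Int.castRingHom S)]

theorem ZMod.exp_two_pi_I_mul_val_div_eq_stdAddChar {N : ℕ} [NeZero N] (x : ZMod N) :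
    Complex.exp (2 * Real.pi * Complex.I * ((x.val : ℂ) / N)) = stdAddChar x := by
  rw [stdAddChar_apply, toCircle_apply, mul_div_assoc]

namespace ZMod

variable {p k : ℕ}

theorem natCast_pow_pred_sq_eq_zero (hk : 2 ≤ k) : ((p : ZMod (p ^ k)) ^ (k - 1)) ^ 2 = 0 := by
  rw [← pow_mul]
  exact pow_eq_zero_of_le (m := k) (by omega) (by rw [← Nat.cast_pow, natCast_self])

theorem natCast_pow_pred_mul_eq_zero_iff (hp : p ≠ 0) (hk : k ≠ 0) (x : ZMod (p ^ k)) :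
    (p : ZMod (p ^ k)) ^ (k - 1) * x = 0 ↔ castHom (dvd_pow_self p hk) (ZMod p) x = 0 := by
  have : NeZero (p ^ k) := ⟨pow_ne_zero k hp⟩
  have hpk : p ^ k = p ^ (k - 1) * p := by rw [← pow_succ, Nat.sub_add_cancel (by omega)]
  rw [← natCast_zmod_val x, map_natCast, ← Nat.cast_pow, ← Nat.cast_mul, natCast_eq_zero_iff,
    natCast_eq_zero_iff]
  generalize x.val = v
  rw [hpk, Nat.mul_dvd_mul_iff_left (pow_pos (Nat.pos_of_ne_zero hp) _)]

theorem isUnit_iff_castHom_ne_zero (hp : p.Prime) (hk : k ≠ 0) (x : ZMod (p ^ k)) :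
    IsUnit x ↔ castHom (dvd_pow_self p hk) (ZMod p) x ≠ 0 := by
  have : NeZero (p ^ k) := ⟨pow_ne_zero k hp.ne_zero⟩
  rw [← natCast_zmod_val x, isUnit_iff_coprime, Nat.coprime_pow_right_iff (Nat.pos_of_ne_zero hk),
    Nat.coprime_comm, hp.coprime_iff_not_dvd, map_natCast, Ne, natCast_eq_zero_iff]

end ZMod

theorem exponential_sum_units_vanishes_general (p : ℕ) (hp : p.Prime) (k : ℕ) [NeZero (p ^ k)]
    (hk : 2 ≤ k) (g : Polynomial ℤ)
    (hsep : ¬∃ γ₀ : ZMod p,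
      (g.map (Int.castRingHom (ZMod p))).eval γ₀ = 0 ∧
        ((g.map (Int.castRingHom (ZMod p))).derivative).eval γ₀ = 0) :
    ∑ δ : (ZMod (p ^ k))ˣ, ∑ γ : ZMod (p ^ k),
        Complex.exp (2 * Real.pi * Complex.I *
          (((((δ : ZMod (p ^ k)) * (g.map (Int.castRingHom (ZMod (p ^ k)))).eval γ).val : ℂ))
            / ((p : ℂ) ^ k)))
      = 0 := by
  have hk0 : k ≠ 0 := by omega
  set G := g.map (Int.castRingHom (ZMod (p ^ k)))
  set c : ZMod (p ^ k) := (p : ZMod (p ^ k)) ^ (k - 1)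
  have hψ := ZMod.isPrimitive_stdAddChar (p ^ k)
  have hc : c ^ 2 = 0 := ZMod.natCast_pow_pred_sq_eq_zero hk
  have hc0 : c ≠ 0 := by
    have : Fact p.Prime := ⟨hp⟩
    simpa [c] using (ZMod.natCast_pow_pred_mul_eq_zero_iff hp.ne_zero hk0 1).not.mpr
      (by rw [map_one]; exact one_ne_zero)
  have hunit : ∀ γ, c * G.derivative.eval γ = 0 → IsUnit (G.eval γ) := by
    intro γ hγ
    rw [ZMod.natCast_pow_pred_mul_eq_zero_iff hp.ne_zero hk0, derivative_map,
      hom_eval_map_intCastRingHom, ← derivative_map] at hγ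
    rw [ZMod.isUnit_iff_castHom_ne_zero hp hk0, hom_eval_map_intCastRingHom]
    exact fun h => hsep ⟨_, h, hγ⟩
  simp_rw [← Nat.cast_pow, ZMod.exp_two_pi_I_mul_val_div_eq_stdAddChar]
  rw [sum_congr rfl fun δ _ => AddChar.sum_units_mul_eval_eq_sum_filter hψ G hc δ, sum_comm]
  exact sum_eq_zero fun γ hγ =>
    AddChar.sum_units_mul_eq_zero hψ ⟨2, hc⟩ hc0 (hunit γ (mem_filter.1 hγ).2)

/-- Let `p` be prime, `k ≥ 2`, and `g ∈ ℤ[x]` of degree at most 3 such that the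
reduction `ḡ` of `g` modulo `p` is nonzero and there is no `γ₀ ∈ 𝔽_p` with
`ḡ(γ₀) = 0 = ḡ'(γ₀)`.  Then `∑_{δ ∈ (ℤ/p^kℤ)^×} ∑_{γ ∈ ℤ/p^kℤ} e^{2πi·δ·g(γ)/p^k} = 0`. -/
theorem exponential_sum_units_vanishes (p : ℕ) (hp : p.Prime) (k : ℕ) [NeZero (p ^ k)]
    (hk : 2 ≤ k) (g : Polynomial ℤ) (hdeg : g.natDegree ≤ 3)
    (hg0 : g.map (Int.castRingHom (ZMod p)) ≠ 0)
    (hsep : ¬∃ γ₀ : ZMod p,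
      (g.map (Int.castRingHom (ZMod p))).eval γ₀ = 0 ∧
        ((g.map (Int.castRingHom (ZMod p))).derivative).eval γ₀ = 0) :
    ∑ δ : (ZMod (p ^ k))ˣ, ∑ γ : ZMod (p ^ k),
        Complex.exp (2 * Real.pi * Complex.I *
          (((((δ : ZMod (p ^ k)) * (g.map (Int.castRingHom (ZMod (p ^ k)))).eval γ).val : ℂ))
            / ((p : ℂ) ^ k)))
      = 0 :=
  exponential_sum_units_vanishes_general p hp k hk g hsep
end
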